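/- arXiv:2007.08144 — 5 statements merged into one kernel-verified Lean document; each statement's English description precedes it below -/
import Mathlib

section
/- For an ultragraph 𝒢, the only saturated hereditary subsets of 𝒢⁰ are ∅ and 𝒢⁰ if and only if: (1) every vertex connects to every infinite path; (2) G⁰ ≥ {v} for every singular vertex v ∈ G⁰; and (3) if e ∈ 𝒢¹ has infinite range r(e), then for every w ∈ G⁰ there exists A_w ⊆ r(e) with r(e) \ A_w finite and w → A_w. -/
set_option maxHeartbeats 1000000
set_option synthInstance.maxHeartbeats 400000

open scoped BigOperators

/-- An ultragraph: countable sets of vertices and edges, a source map, and a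
range map taking values in nonempty subsets of vertices. -/
structure Ultragraph where
  V : Type
  E : Type
  countableV : Countable V
  countableE : Countable E
  src : E → V
  rng : E → Set V
  rng_nonempty : ∀ e, (rng e).Nonempty

namespace Ultragraph

variable (G : Ultragraph)

/-- Membership in `𝒢⁰`: the smallest collection of subsets of vertices containing
all singletons and all edge ranges, and closed under finite unions and finite
intersections (in particular it contains the empty set, the empty union). -/
inductive Mem0 : Set G.V → Prop
  | empty : Mem0 ∅
  | singleton (v : G.V) : Mem0 {v}
  | range (e : G.E) : Mem0 (G.rng e)
  | union {A B : Set G.V} : Mem0 A → Mem0 B → Mem0 (A ∪ B)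
  | inter {A B : Set G.V} : Mem0 A → Mem0 B → Mem0 (A ∩ B)

/-- The collection `𝒢⁰`. -/
def G0 : Set (Set G.V) := {A | G.Mem0 A}

/-- The set of edges emitted by a vertex. -/
def emitted (v : G.V) : Set G.E := {e | G.src e = v}

/-- A regular vertex emits at least one and finitely many edges. -/
def IsRegular (v : G.V) : Prop := (G.emitted v).Nonempty ∧ (G.emitted v).Finite

/-- A sink emits no edges. -/
def IsSink (v : G.V) : Prop := G.emitted v = ∅

/-- A singular vertex is a sink or an infinite emitter. -/
def IsSingular (v : G.V) : Prop := G.IsSink v ∨ (G.emitted v).Infinite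

/-- A (finite, positive length) path is a list of edges `e₁ ⋯ eₙ` with
`s(e_{i+1}) ∈ r(e_i)`. -/
def IsPathList (l : List G.E) : Prop := l.Chain' (fun e f => G.src f ∈ G.rng e)

/-- A cycle is a nonempty path `e₁ ⋯ eₙ` with `s(e₁) ∈ r(eₙ)`. -/
def IsCycle (l : List G.E) : Prop :=
  ∃ h : l ≠ [], G.IsPathList l ∧ G.src (l.head h) ∈ G.rng (l.getLast h)

/-- An ultragraph is acyclic if it has no cycles. -/
def Acyclic : Prop := ∀ l : List G.E, ¬ G.IsCycle l

/-- An exit for a cycle `e₁ ⋯ eₙ`: either an edge `f` with `s(f) ∈ r(e_i)` and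
`f ≠ e_{i+1}` (indices mod `n`), or a sink `w ∈ r(e_i)` for some `i`. -/
def HasExit (l : List G.E) : Prop :=
  ∃ i : Fin l.length,
    (∃ f : G.E, G.src f ∈ G.rng (l.get i) ∧
        f ≠ l.get ⟨((i : ℕ) + 1) % l.length, Nat.mod_lt _ i.pos⟩) ∨
    (∃ w ∈ G.rng (l.get i), G.IsSink w)

/-- The ranges of finite paths starting at `v` (including the length-zero
path `{v}`). -/
def pathRangesFrom (v : G.V) : Set (Set G.V) :=
  {A | A = {v} ∨ ∃ (l : List G.E) (h : l ≠ []),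
    G.IsPathList l ∧ G.src (l.head h) = v ∧ A = G.rng (l.getLast h)}

/-- `w ≥ v`: there is a path from `w` whose range contains `v`. -/
def Geq (w v : G.V) : Prop := ∃ A ∈ G.pathRangesFrom w, v ∈ A

/-- `v → A`: finitely many paths starting at `v` whose ranges cover `A`. -/
def ConnectsSet (v : G.V) (A : Set G.V) : Prop :=
  ∃ (n : ℕ) (B : Fin n → Set G.V),
    (∀ i, B i ∈ G.pathRangesFrom v) ∧ A ⊆ ⋃ i, B i

/-- An infinite path. -/
def IsInfinitePath (α : ℕ → G.E) : Prop := ∀ i, G.src (α (i + 1)) ∈ G.rng (α i)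

/-- Condition (1): every vertex connects to every infinite path. -/
def CondInfPaths : Prop :=
  ∀ α : ℕ → G.E, G.IsInfinitePath α → ∀ v : G.V, ∃ i, G.Geq v (G.src (α i))

/-- Condition (2): `G⁰ ≥ {v}` for every singular vertex `v`. -/
def CondSingular : Prop :=
  ∀ v : G.V, G.IsSingular v → ∀ w : G.V, G.Geq w v

/-- Condition (3): for every edge with infinite range and every vertex `w`
there is a cofinite subset of the range covered by paths from `w`. -/
def CondInfRange : Prop :=
  ∀ e : G.E, (G.rng e).Infinite → ∀ w : G.V,
    ∃ A ⊆ G.rng e, (G.rng e \ A).Finite ∧ G.ConnectsSet w A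

/-- A hereditary collection `ℋ ⊆ 𝒢⁰`. -/
def Hereditary (H : Set (Set G.V)) : Prop :=
  (∀ A ∈ H, G.Mem0 A) ∧
  (∀ e : G.E, {G.src e} ∈ H → G.rng e ∈ H) ∧
  (∀ A ∈ H, ∀ B ∈ H, A ∪ B ∈ H) ∧
  (∀ A ∈ H, ∀ B : Set G.V, G.Mem0 B → B ⊆ A → B ∈ H)

/-- A saturated collection. -/
def Saturated (H : Set (Set G.V)) : Prop :=
  ∀ v : G.V, G.IsRegular v → (∀ e : G.E, G.src e = v → G.rng e ∈ H) → {v} ∈ H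

/-- The only saturated hereditary collections are the trivial ones:
(at most) `{∅}` and all of `𝒢⁰`. -/
def OnlyTrivialSatHer : Prop :=
  ∀ H : Set (Set G.V), G.Hereditary H → G.Saturated H → H ⊆ {∅} ∨ H = G.G0

/-- The smallest saturated hereditary collection containing `H`. -/
def satHerClosure (H : Set (Set G.V)) : Set (Set G.V) :=
  ⋂₀ {H' : Set (Set G.V) | G.Hereditary H' ∧ G.Saturated H' ∧ H ⊆ H'}

/-- `Sₙ`-operation: regular vertices all of whose emitted edge ranges lie in `X`. -/
def Sset (X : Set (Set G.V)) : Set G.V :=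
  {w | G.IsRegular w ∧ ∀ e : G.E, G.src e = w → G.rng e ∈ X}

/-- The chain `ℋ₀ := ℋ`, `ℋ_{n+1} := {A ∪ F : A ∈ ℋₙ, F finite ⊆ Sₙ}`. -/
def hchain (H : Set (Set G.V)) : ℕ → Set (Set G.V)
  | 0 => H
  | n + 1 => {B | ∃ A ∈ hchain H n, ∃ F : Finset G.V,
      (F : Set G.V) ⊆ G.Sset (hchain H n) ∧ B = A ∪ (F : Set G.V)}

/-- A vertex connects to a cycle. -/
def ConnectsToCycle (v : G.V) : Prop :=
  ∃ l : List G.E, G.IsCycle l ∧ ∃ e ∈ l, G.Geq v (G.src e)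

/-- A path ends at the vertex `v` (the empty list stands for the length-zero
path `{v}`). -/
def EndsAt (l : List G.E) (v : G.V) : Prop :=
  G.IsPathList l ∧ ∀ h : l ≠ [], G.rng (l.getLast h) = {v}

/-- `c⁰`: the subsets (in `𝒢⁰`) of the set of sources of the edges of `c`. -/
def cZero (c : List G.E) : Set (Set G.V) :=
  {A | G.Mem0 A ∧ A ⊆ {w | ∃ e ∈ c, G.src e = w}}

end Ultragraph

section RingDefs

variable (R : Type) [NonUnitalRing R]

/-- A ring has local units if every finite subset lies in a corner `eRe`. -/
def HasLocalUnits : Prop :=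
  ∀ S : Finset R, ∃ e : R, e * e = e ∧ ∀ x ∈ S, e * x = x ∧ x * e = x

/-- `R` is a division ring: it has an identity and nonzero elements are invertible. -/
def IsDivisionRingLike : Prop :=
  ∃ u : R, (∀ x : R, u * x = x ∧ x * u = x) ∧ u ≠ 0 ∧
    ∀ x : R, x ≠ 0 → ∃ y : R, x * y = u ∧ y * x = u

/-- An infinite idempotent: `eR` is isomorphic to a proper direct summand of
itself; algebraically, `e = f + g` with `f, g` orthogonal idempotents, `g ≠ 0`,
and `eR ≅ fR` (witnessed by `a, b` with `ab = e`, `ba = f`). -/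
def IsInfiniteIdem (e : R) : Prop :=
  e * e = e ∧ ∃ f g : R, f * f = f ∧ g * g = g ∧ f * g = 0 ∧ g * f = 0 ∧
    f + g = e ∧ g ≠ 0 ∧ ∃ a b : R, a * b = e ∧ b * a = f

/-- `R` is purely infinite: every nonzero right ideal contains an infinite
idempotent. -/
def PurelyInfinite : Prop :=
  ∀ I : AddSubgroup R, (∀ x ∈ I, ∀ r : R, x * r ∈ I) → I ≠ ⊥ →
    ∃ e ∈ I, IsInfiniteIdem R e

/-- A simple ring: nonzero multiplication and no nontrivial two-sided ideals. -/
def RingIsSimple : Prop :=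
  (∃ a b : R, a * b ≠ 0) ∧
    ∀ I : AddSubgroup R, (∀ x ∈ I, ∀ r : R, x * r ∈ I ∧ r * x ∈ I) →
      I = ⊥ ∨ I = ⊤

/-- Purely infinite simple ring. -/
def PurelyInfiniteSimple : Prop := RingIsSimple R ∧ PurelyInfinite R

/-- von Neumann regularity. -/
def IsVonNeumannRegularRing : Prop := ∀ a : R, ∃ b : R, a = a * b * a

end RingDefs

section AlgDefs

variable (K : Type) [Field K]

/-- A matricial `K`-algebra: isomorphic (as a `K`-algebra) to a finite direct
sum of full finite-dimensional matrix algebras over `K`. -/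
def IsMatricialAlgebra (B : Type) [NonUnitalRing B] [Module K B] : Prop :=
  ∃ (n : ℕ) (d : Fin n → ℕ)
    (e : B ≃+* (∀ i : Fin n, Matrix (Fin (d i)) (Fin (d i)) K)),
    ∀ (k : K) (x : B), e (k • x) = k • e x

/-- A locally matricial `K`-algebra: a directed union of matricial subalgebras. -/
def IsLocallyMatricial (A : Type) [NonUnitalRing A] [Module K A] : Prop :=
  ∃ (ι : Type) (B : ι → NonUnitalSubalgebra K A),
    (∀ i j, ∃ k, B i ≤ B k ∧ B j ≤ B k) ∧
    (∀ x : A, ∃ i, x ∈ B i) ∧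
    ∀ i, IsMatricialAlgebra K (B i)

/-- `I` is the two-sided ideal of the non-unital `K`-algebra `A` generated by
the set `s`. -/
def IsIdealGeneratedBy (A : Type) [NonUnitalRing A] [Module K A]
    (I : NonUnitalSubalgebra K A) (s : Set A) : Prop :=
  s ⊆ (I : Set A) ∧ (∀ x ∈ I, ∀ a : A, a * x ∈ I ∧ x * a ∈ I) ∧
    ∀ J : NonUnitalSubalgebra K A, s ⊆ (J : Set A) →
      (∀ x ∈ J, ∀ a : A, a * x ∈ J ∧ x * a ∈ J) → I ≤ J

end AlgDefs

namespace Ultragraph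

/-- Generators of the ultragraph Leavitt path algebra. -/
inductive LGen (G : Ultragraph) : Type
  | pr : {A : Set G.V // G.Mem0 A} → LGen G
  | ed : G.E → LGen G
  | st : G.E → LGen G

variable (K : Type) [Field K] (G : Ultragraph)

/-- The generator `p_A` in the free algebra. -/
noncomputable def genP (A : Set G.V) (h : G.Mem0 A) : FreeAlgebra K (LGen G) :=
  FreeAlgebra.ι K (LGen.pr ⟨A, h⟩)

/-- The generator `s_e` in the free algebra. -/
noncomputable def genS (e : G.E) : FreeAlgebra K (LGen G) :=
  FreeAlgebra.ι K (LGen.ed e)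

/-- The generator `s*_e` in the free algebra. -/
noncomputable def genT (e : G.E) : FreeAlgebra K (LGen G) :=
  FreeAlgebra.ι K (LGen.st e)

/-- The defining relations of the ultragraph Leavitt path algebra. -/
inductive LRel : FreeAlgebra K (LGen G) → FreeAlgebra K (LGen G) → Prop
  | pEmpty : LRel (genP K G ∅ Mem0.empty) 0
  | pMul {A B : Set G.V} (hA : G.Mem0 A) (hB : G.Mem0 B) :
      LRel (genP K G A hA * genP K G B hB) (genP K G (A ∩ B) (hA.inter hB))
  | pUnion {A B : Set G.V} (hA : G.Mem0 A) (hB : G.Mem0 B) :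
      LRel (genP K G (A ∪ B) (hA.union hB))
        (genP K G A hA + genP K G B hB - genP K G (A ∩ B) (hA.inter hB))
  | srcMul (e : G.E) :
      LRel (genP K G {G.src e} (Mem0.singleton _) * genS K G e) (genS K G e)
  | mulRng (e : G.E) :
      LRel (genS K G e * genP K G (G.rng e) (Mem0.range e)) (genS K G e)
  | rngStar (e : G.E) :
      LRel (genP K G (G.rng e) (Mem0.range e) * genT K G e) (genT K G e)
  | starSrc (e : G.E) :
      LRel (genT K G e * genP K G {G.src e} (Mem0.singleton _)) (genT K G e)
  | starMulSame (e : G.E) :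
      LRel (genT K G e * genS K G e) (genP K G (G.rng e) (Mem0.range e))
  | starMulDiff {e f : G.E} (h : e ≠ f) : LRel (genT K G e * genS K G f) 0
  | ck (v : G.V) (h : G.IsRegular v) :
      LRel (genP K G {v} (Mem0.singleton v))
        (∑ e ∈ h.2.toFinset, genS K G e * genT K G e)

/-- The unital envelope: the quotient of the free algebra by the relations. -/
abbrev LPAEnv := RingQuot (LRel K G)

/-- The quotient map. -/
noncomputable def lmk : FreeAlgebra K (LGen G) →ₐ[K] LPAEnv K G :=
  RingQuot.mkAlgHom K (LRel K G)

/-- The Leavitt path algebra of the ultragraph `G`, as the non-unital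
subalgebra of the unital envelope generated by the generators. -/
noncomputable def LPAsub : NonUnitalSubalgebra K (LPAEnv K G) :=
  NonUnitalAlgebra.adjoin K
    (Set.range fun g : LGen G => lmk K G (FreeAlgebra.ι K g))

/-- The Leavitt path algebra `L_K(𝒢)` (as a type). -/
abbrev LPA := ↥(LPAsub K G)

/-- The element `p_A` of `L_K(𝒢)`. -/
noncomputable def p (A : Set G.V) (h : G.Mem0 A) : LPA K G :=
  ⟨lmk K G (genP K G A h),
   NonUnitalAlgebra.subset_adjoin K ⟨LGen.pr ⟨A, h⟩, rfl⟩⟩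

/-- The element `s_e` of `L_K(𝒢)`. -/
noncomputable def se (e : G.E) : LPA K G :=
  ⟨lmk K G (genS K G e),
   NonUnitalAlgebra.subset_adjoin K ⟨LGen.ed e, rfl⟩⟩

/-- The element `s*_e` of `L_K(𝒢)`. -/
noncomputable def st (e : G.E) : LPA K G :=
  ⟨lmk K G (genT K G e),
   NonUnitalAlgebra.subset_adjoin K ⟨LGen.st e, rfl⟩⟩

/-- `s_α` for a path `α` ending at `v` (the empty path giving `p_{v}`). -/
noncomputable def spath (v : G.V) : List G.E → LPA K G
  | [] => p K G {v} (Mem0.singleton v)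
  | e :: l => se K G e * spath v l

/-- `s*_β` for a path `β` ending at `v`. -/
noncomputable def gpath (v : G.V) : List G.E → LPA K G
  | [] => p K G {v} (Mem0.singleton v)
  | e :: l => gpath v l * st K G e

/-- `s_c^n` for a cycle `c` based at `v`. -/
noncomputable def scn (v : G.V) (c : List G.E) : ℕ → LPA K G
  | 0 => p K G {v} (Mem0.singleton v)
  | n + 1 => spath K G v c * scn v c n

/-- `(s*_c)^n` for a cycle `c` based at `v`. -/
noncomputable def gcn (v : G.V) (c : List G.E) : ℕ → LPA K G
  | 0 => p K G {v} (Mem0.singleton v)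
  | n + 1 => gpath K G v c * gcn v c n

/-- `s_c^k` for `k : ℤ` (negative powers being powers of `s*_c`). -/
noncomputable def scz (v : G.V) (c : List G.E) : ℤ → LPA K G
  | Int.ofNat n => scn K G v c n
  | Int.negSucc n => gcn K G v c (n + 1)

end Ultragraph

section LaurentMatrices

variable (K : Type) [Field K] (Λ : Type)

/-- The `Λ×Λ` matrix over `K[x,x⁻¹]` with entry `r` at `(a,b)` and zero
elsewhere, realized as a `K`-linear endomorphism of `Λ →₀ K[x,x⁻¹]`. -/
noncomputable def matUnit (a b : Λ) (r : LaurentPolynomial K) :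
    Module.End K (Λ →₀ LaurentPolynomial K) :=
  (Finsupp.lsingle a).comp ((LinearMap.mulLeft K r).comp (Finsupp.lapply b))

/-- `M_Λ(K[x,x⁻¹])`: the non-unital `K`-algebra of `Λ×Λ` matrices over the
Laurent polynomial ring with finitely many nonzero entries. -/
noncomputable def FinMatLaurent :
    NonUnitalSubalgebra K (Module.End K (Λ →₀ LaurentPolynomial K)) :=
  NonUnitalAlgebra.adjoin K
    (Set.range fun t : Λ × Λ × LaurentPolynomial K => matUnit K Λ t.1 t.2.1 t.2.2)

end LaurentMatrices

/-! ### Auxiliary development for Statement 9 -/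

namespace Ultragraph

/-- Inductive characterization of path ranges from `v`. -/
inductive Reach (G : Ultragraph) (v : G.V) : Set G.V → Prop
  | refl : Reach G v {v}
  | step {B : Set G.V} (e : G.E) : Reach G v B → G.src e ∈ B → Reach G v (G.rng e)

variable {G : Ultragraph}

lemma aux_reach_extend {v : G.V} :
    ∀ (l : List G.E) (h : l ≠ []) (B : Set G.V), G.Reach v B → G.IsPathList l →
      G.src (l.head h) ∈ B → G.Reach v (G.rng (l.getLast h)) := by
  intro l
  induction l with
  | nil => intro h; exact absurd rfl h
  | cons e l ih =>
    intro h B hB hp hs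
    have hp' : List.Chain' (fun a b => G.src b ∈ G.rng a) (e :: l) := hp
    rcases eq_or_ne l [] with rfl | hl
    · simpa using Reach.step e hB (by simpa using hs)
    · have h1 : G.IsPathList l := hp'.tail
      have h2 : G.src (l.head hl) ∈ G.rng e := by
        refine (List.isChain_cons.mp hp').1 (l.head hl) ?_
        rw [List.head?_eq_head hl]
        rfl
      have h3 := ih hl (G.rng e) (Reach.step e hB (by simpa using hs)) h1 h2
      rwa [List.getLast_cons hl]

lemma reach_of_mem_pathRanges {v : G.V} {B : Set G.V}
    (hB : B ∈ G.pathRangesFrom v) : G.Reach v B := by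
  rcases hB with rfl | ⟨l, h, hp, hs, rfl⟩
  · exact Reach.refl
  · exact aux_reach_extend l h {v} Reach.refl hp (by simp [hs])

lemma mem_pathRanges_of_reach {v : G.V} {B : Set G.V}
    (hB : G.Reach v B) : B ∈ G.pathRangesFrom v := by
  induction hB with
  | refl => exact Or.inl rfl
  | step e hB hsrc ih =>
    rcases ih with h1 | ⟨l, h, hp, hs, hB'⟩
    · have hse : G.src e = v := by rw [h1] at hsrc; exact hsrc
      refine Or.inr ⟨[e], by simp, ?_, ?_, ?_⟩
      · exact List.isChain_singleton e
      · simpa using hse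
      · simp
    · refine Or.inr ⟨l ++ [e], by simp, ?_, ?_, ?_⟩
      · refine List.isChain_append.mpr ⟨hp, List.isChain_singleton e, ?_⟩
        intro x hx y hy
        rw [List.getLast?_eq_getLast h] at hx
        have hx' : l.getLast h = x := by simpa using hx
        have hy' : e = y := by simpa using hy
        subst hx'; subst hy'
        rw [hB'] at hsrc
        exact hsrc
      · rw [List.head_append_of_ne_nil h]; exact hs
      · rw [List.getLast_append_of_ne_nil (h₂ := (by simp : [e] ≠ []))]
        simp

/-- Basic `ConnectsSet` lemmas. -/
lemma connectsSet_empty (w : G.V) : G.ConnectsSet w ∅ :=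
  ⟨0, Fin.elim0, fun i => i.elim0, by simp⟩

lemma connectsSet_single {w : G.V} {B : Set G.V} (h : G.Reach w B) :
    G.ConnectsSet w B :=
  ⟨1, fun _ => B, fun _ => mem_pathRanges_of_reach h,
    Set.subset_iUnion (fun _ : Fin 1 => B) 0⟩

lemma connectsSet_self (w : G.V) : G.ConnectsSet w {w} :=
  connectsSet_single Reach.refl

lemma connectsSet_mono {w : G.V} {A A' : Set G.V} (h : A' ⊆ A)
    (hc : G.ConnectsSet w A) : G.ConnectsSet w A' := by
  obtain ⟨n, B, h1, h2⟩ := hc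
  exact ⟨n, B, h1, h.trans h2⟩

lemma connectsSet_union {w : G.V} {A A' : Set G.V} (h : G.ConnectsSet w A)
    (h' : G.ConnectsSet w A') : G.ConnectsSet w (A ∪ A') := by
  obtain ⟨n, B, h1, h2⟩ := h
  obtain ⟨m, C, h3, h4⟩ := h'
  refine ⟨n + m, Fin.append B C, ?_, ?_⟩
  · intro i
    refine Fin.addCases (fun i => ?_) (fun j => ?_) i
    · rw [Fin.append_left]; exact h1 i
    · rw [Fin.append_right]; exact h3 j
  · rintro x (hx | hx)
    · obtain ⟨i, hi⟩ := Set.mem_iUnion.mp (h2 hx)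
      exact Set.mem_iUnion.mpr ⟨Fin.castAdd m i, by rw [Fin.append_left]; exact hi⟩
    · obtain ⟨j, hj⟩ := Set.mem_iUnion.mp (h4 hx)
      exact Set.mem_iUnion.mpr ⟨Fin.natAdd n j, by rw [Fin.append_right]; exact hj⟩

/-- The hereditary base collection for the closure of `{{w}}`. -/
def H0 (G : Ultragraph) (w : G.V) : Set (Set G.V) :=
  {A | G.Mem0 A ∧ G.ConnectsSet w A}

/-- The saturated hereditary closure of `{{w}}`. -/
def SH (G : Ultragraph) (w : G.V) : Set (Set G.V) :=
  {A | ∃ n, A ∈ G.hchain (G.H0 w) n}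

lemma mem0_finset (F : Finset G.V) : G.Mem0 (F : Set G.V) := by
  classical
  induction F using Finset.induction_on with
  | empty => rw [Finset.coe_empty]; exact Mem0.empty
  | insert _ _ ha ih =>
    rw [Finset.coe_insert, Set.insert_eq]
    exact Mem0.union (Mem0.singleton _) ih

lemma h0_hereditary (w : G.V) : G.Hereditary (G.H0 w) := by
  refine ⟨fun A hA => hA.1, ?_, ?_, ?_⟩
  · rintro e ⟨-, hc⟩
    refine ⟨Mem0.range e, ?_⟩
    obtain ⟨n, B, h1, h2⟩ := hc
    obtain ⟨i, hi⟩ := Set.mem_iUnion.mp (h2 (Set.mem_singleton _))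
    exact connectsSet_single (Reach.step e (reach_of_mem_pathRanges (h1 i)) hi)
  · rintro A ⟨hA1, hA2⟩ B ⟨hB1, hB2⟩
    exact ⟨Mem0.union hA1 hB1, connectsSet_union hA2 hB2⟩
  · rintro A ⟨hA1, hA2⟩ B hB1 hBA
    exact ⟨hB1, connectsSet_mono hBA hA2⟩

lemma hchain_succ_self {H : Set (Set G.V)} {n : ℕ} {A : Set G.V}
    (hA : A ∈ G.hchain H n) : A ∈ G.hchain H (n + 1) :=
  ⟨A, hA, ∅, by simp, by simp⟩

lemma hchain_mono {H : Set (Set G.V)} {m n : ℕ} (h : m ≤ n) :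
    G.hchain H m ⊆ G.hchain H n := by
  induction h with
  | refl => exact fun A hA => hA
  | step _ ih => exact fun A hA => hchain_succ_self (ih hA)

lemma hchain_hereditary {H : Set (Set G.V)} (hH : G.Hereditary H) :
    ∀ n, G.Hereditary (G.hchain H n) := by
  intro n
  induction n with
  | zero => exact hH
  | succ n ih =>
    classical
    refine ⟨?_, ?_, ?_, ?_⟩
    · rintro B ⟨A, hA, F, hF, rfl⟩
      exact Mem0.union (ih.1 A hA) (mem0_finset F)
    · rintro e ⟨A, hA, F, hF, hEq⟩
      have hm : G.src e ∈ A ∪ (F : Set G.V) := hEq ▸ Set.mem_singleton _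
      rcases hm with hm | hm
      · have hsub : A ⊆ {G.src e} := hEq ▸ Set.subset_union_left
        have hA' : {G.src e} ∈ G.hchain H n :=
          (Set.Subset.antisymm hsub (Set.singleton_subset_iff.mpr hm)) ▸ hA
        exact hchain_succ_self (ih.2.1 e hA')
      · exact hchain_succ_self ((hF hm).2 e rfl)
    · rintro _ ⟨A, hA, F, hF, rfl⟩ _ ⟨A', hA', F', hF', rfl⟩
      refine ⟨A ∪ A', ih.2.2.1 A hA A' hA', F ∪ F', ?_, ?_⟩
      · rw [Finset.coe_union]; exact Set.union_subset hF hF'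
      · rw [Finset.coe_union]; ext x
        simp only [Set.mem_union, Finset.mem_coe]; tauto
    · rintro _ ⟨A, hA, F, hF, rfl⟩ B hB1 hBsub
      refine ⟨B ∩ A,
        ih.2.2.2 A hA (B ∩ A) (Mem0.inter hB1 (ih.1 A hA)) Set.inter_subset_right,
        F.filter (fun x => x ∈ B), ?_, ?_⟩
      · intro x hx
        simp only [Finset.coe_filter, Set.mem_setOf_eq] at hx
        exact hF hx.1
      · ext x
        simp only [Set.mem_union, Set.mem_inter_iff, Finset.coe_filter,
          Set.mem_setOf_eq, Finset.mem_coe]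
        constructor
        · intro hx
          rcases hBsub hx with h | h
          · exact Or.inl ⟨hx, h⟩
          · exact Or.inr ⟨h, hx⟩
        · rintro (⟨h, -⟩ | ⟨-, h⟩) <;> exact h

lemma sh_hereditary (w : G.V) : G.Hereditary (G.SH w) := by
  refine ⟨?_, ?_, ?_, ?_⟩
  · rintro A ⟨n, hA⟩
    exact (hchain_hereditary (h0_hereditary w) n).1 A hA
  · rintro e ⟨n, hA⟩
    exact ⟨n, (hchain_hereditary (h0_hereditary w) n).2.1 e hA⟩
  · rintro A ⟨n, hA⟩ B ⟨m, hB⟩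
    exact ⟨max n m, (hchain_hereditary (h0_hereditary w) (max n m)).2.2.1 A
      (hchain_mono (le_max_left n m) hA) B (hchain_mono (le_max_right n m) hB)⟩
  · rintro A ⟨n, hA⟩ B hB1 hBA
    exact ⟨n, (hchain_hereditary (h0_hereditary w) n).2.2.2 A hA B hB1 hBA⟩

lemma exists_uniform_level (w : G.V) (S : Finset G.E) :
    (∀ e ∈ S, G.rng e ∈ G.SH w) →
      ∃ N, ∀ e ∈ S, G.rng e ∈ G.hchain (G.H0 w) N := by
  classical
  induction S using Finset.induction_on with
  | empty => intro _; exact ⟨0, by simp⟩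
  | @insert a s ha ih =>
    intro h
    obtain ⟨N₁, h₁⟩ := ih (fun e he => h e (Finset.mem_insert_of_mem he))
    obtain ⟨N₂, h₂⟩ := h a (Finset.mem_insert_self a s)
    refine ⟨max N₁ N₂, fun e he => ?_⟩
    rcases Finset.mem_insert.mp he with rfl | he
    · exact hchain_mono (le_max_right _ _) h₂
    · exact hchain_mono (le_max_left _ _) (h₁ e he)

lemma empty_mem_H0 (w : G.V) : (∅ : Set G.V) ∈ G.H0 w :=
  ⟨Mem0.empty, connectsSet_empty w⟩

lemma sh_saturated (w : G.V) : G.Saturated (G.SH w) := by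
  intro v hv he
  obtain ⟨N, hN⟩ := exists_uniform_level w hv.2.toFinset
    (fun e hE => he e (by
      have := (Set.Finite.mem_toFinset hv.2).mp hE
      exact this))
  refine ⟨N + 1, ∅, hchain_mono (Nat.zero_le N) (empty_mem_H0 w), {v}, ?_, by simp⟩
  intro x hx
  have hxv : x = v := by simpa using hx
  subst hxv
  refine ⟨hv, fun e hsrc => hN e ((Set.Finite.mem_toFinset hv.2).mpr hsrc)⟩

lemma singleton_mem_SH (w : G.V) : ({w} : Set G.V) ∈ G.SH w :=
  ⟨0, Mem0.singleton w, connectsSet_self w⟩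

/-- Extraction lemma for infinite paths. -/
lemma extract_inf {v : G.V} {α : ℕ → G.E} (hα : G.IsInfinitePath α) :
    ∀ (n : ℕ) (A : Set G.V), A ∈ G.hchain (G.H0 v) n →
      ∀ i, G.src (α i) ∈ A → ∃ j, G.Geq v (G.src (α j)) := by
  intro n
  induction n with
  | zero =>
    rintro A ⟨-, n', B, h1, h2⟩ i hi
    obtain ⟨k, hk⟩ := Set.mem_iUnion.mp (h2 hi)
    exact ⟨i, B k, h1 k, hk⟩
  | succ n ih =>
    rintro _ ⟨A, hA, F, hF, rfl⟩ i hi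
    rcases hi with hi | hi
    · exact ih A hA i hi
    · exact ih (G.rng (α i)) ((hF hi).2 (α i) rfl) (i + 1) (hα i)

/-- Extraction lemma for singular vertices. -/
lemma extract_sing {w v : G.V} (hv : G.IsSingular v) :
    ∀ (n : ℕ) (A : Set G.V), A ∈ G.hchain (G.H0 w) n → v ∈ A → G.Geq w v := by
  intro n
  induction n with
  | zero =>
    rintro A ⟨-, n', B, h1, h2⟩ hvA
    obtain ⟨k, hk⟩ := Set.mem_iUnion.mp (h2 hvA)
    exact ⟨B k, h1 k, hk⟩
  | succ n ih =>
    rintro _ ⟨A, hA, F, hF, rfl⟩ hvA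
    rcases hvA with h | h
    · exact ih A hA h
    · exfalso
      have hr := (hF h).1
      rcases hv with hv | hv
      · exact hr.1.ne_empty hv
      · exact hv hr.2

/-- Extraction lemma for cofinite covering. -/
lemma extract_cofin {w : G.V} :
    ∀ (n : ℕ) (A : Set G.V), A ∈ G.hchain (G.H0 w) n →
      ∃ A' ⊆ A, (A \ A').Finite ∧ G.ConnectsSet w A' := by
  intro n
  induction n with
  | zero =>
    rintro A ⟨-, hc⟩
    exact ⟨A, subset_rfl, by simp, hc⟩
  | succ n ih =>
    rintro _ ⟨A, hA, F, hF, rfl⟩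
    obtain ⟨A', h1, h2, h3⟩ := ih A hA
    refine ⟨A', h1.trans Set.subset_union_left, ?_, h3⟩
    refine (h2.union F.finite_toSet).subset ?_
    intro x hx
    rcases hx.1 with h | h
    · exact Or.inl ⟨h, hx.2⟩
    · exact Or.inr h

/-- From a singleton in a hereditary collection, everything reachable is in it. -/
lemma reach_mem_of_hereditary {H : Set (Set G.V)} (hH : G.Hereditary H) {u : G.V}
    (hu : ({u} : Set G.V) ∈ H) {B : Set G.V} (hB : G.Reach u B) : B ∈ H := by
  induction hB with
  | refl => exact hu
  | step e hB hsrc ih =>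
    have hs : ({G.src e} : Set G.V) ∈ H :=
      hH.2.2.2 _ ih {G.src e} (Mem0.singleton _) (Set.singleton_subset_iff.mpr hsrc)
    exact hH.2.1 e hs

lemma finUnion_mem {H : Set (Set G.V)} (hH : G.Hereditary H) (hempty : ∅ ∈ H) :
    ∀ (n : ℕ) (B : Fin n → Set G.V), (∀ i, B i ∈ H) → (⋃ i, B i) ∈ H := by
  intro n
  induction n with
  | zero => intro B hB; simpa using hempty
  | succ n ih =>
    intro B hB
    have hEq : (⋃ i, B i) = B 0 ∪ ⋃ i : Fin n, B i.succ := by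
      ext x
      simp only [Set.mem_iUnion, Set.mem_union]
      exact Fin.exists_fin_succ
    rw [hEq]
    exact hH.2.2.1 _ (hB 0) _ (ih _ (fun i => hB i.succ))

lemma finset_mem_of_singletons {H : Set (Set G.V)} (hH : G.Hereditary H)
    (hempty : ∅ ∈ H) :
    ∀ F : Finset G.V, (∀ u ∈ F, ({u} : Set G.V) ∈ H) → (F : Set G.V) ∈ H := by
  classical
  intro F
  induction F using Finset.induction_on with
  | empty => intro _; rw [Finset.coe_empty]; exact hempty
  | @insert a s ha ih =>
    intro h
    rw [Finset.coe_insert, Set.insert_eq]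
    exact hH.2.2.1 _ (h a (Finset.mem_insert_self a s)) _
      (ih fun u hu => h u (Finset.mem_insert_of_mem hu))

/-- Conditions (1)-(3) imply triviality of saturated hereditary collections. -/
theorem conditions_imply (h1 : G.CondInfPaths) (h2 : G.CondSingular)
    (h3 : G.CondInfRange) : G.OnlyTrivialSatHer := by
  intro H hHer hSat
  by_cases htriv : ∀ A ∈ H, A = ∅
  · exact Or.inl (fun A hA => htriv A hA)
  · right
    push_neg at htriv
    obtain ⟨A₀, hA₀, hA₀ne⟩ := htriv
    obtain ⟨v₀, hv₀⟩ := hA₀ne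
    have hempty : ∅ ∈ H := hHer.2.2.2 A₀ hA₀ ∅ Mem0.empty (Set.empty_subset _)
    have hv₀H : ({v₀} : Set G.V) ∈ H :=
      hHer.2.2.2 A₀ hA₀ {v₀} (Mem0.singleton v₀) (Set.singleton_subset_iff.mpr hv₀)
    have hgeq : ∀ u : G.V, G.Geq v₀ u → ({u} : Set G.V) ∈ H := by
      rintro u ⟨B, hB, huB⟩
      have hBH : B ∈ H :=
        reach_mem_of_hereditary hHer hv₀H (reach_of_mem_pathRanges hB)
      exact hHer.2.2.2 B hBH {u} (Mem0.singleton u) (Set.singleton_subset_iff.mpr huB)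
    have hsingle : ∀ v : G.V, ({v} : Set G.V) ∈ H := by
      by_contra hW
      push_neg at hW
      obtain ⟨w₀, hw₀⟩ := hW
      have hstep : ∀ v : G.V, ({v} : Set G.V) ∉ H →
          ∃ e : G.E, G.src e = v ∧ ∃ u ∈ G.rng e, ({u} : Set G.V) ∉ H := by
        intro v hv
        have hreg : G.IsRegular v := by
          by_contra hnreg
          have hsing : G.IsSingular v := by
            rcases Set.eq_empty_or_nonempty (G.emitted v) with hsink | hne
            · exact Or.inl hsink
            · refine Or.inr ?_
              intro hfin
              exact hnreg ⟨hne, hfin⟩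
          exact hv (hgeq v (h2 v hsing v₀))
        have hne : ¬ ∀ e : G.E, G.src e = v → G.rng e ∈ H :=
          fun hall => hv (hSat v hreg hall)
        push_neg at hne
        obtain ⟨e, hsrc, hrng⟩ := hne
        refine ⟨e, hsrc, ?_⟩
        by_contra hnu
        push_neg at hnu
        apply hrng
        have hcov : ∃ U ∈ H, (G.rng e \ U).Finite := by
          rcases Set.finite_or_infinite (G.rng e) with hfin | hinf
          · exact ⟨∅, hempty, by simpa using hfin⟩
          · obtain ⟨A, hAsub, hAfin, n, B, hB1, hB2⟩ := h3 e hinf v₀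
            refine ⟨⋃ i, B i, finUnion_mem hHer hempty n B
              (fun i => reach_mem_of_hereditary hHer hv₀H
                (reach_of_mem_pathRanges (hB1 i))), ?_⟩
            exact hAfin.subset (fun x hx => ⟨hx.1, fun hxA => hx.2 (hB2 hxA)⟩)
        obtain ⟨U, hU, hUfin⟩ := hcov
        have hTfin : ((G.rng e \ U) : Set G.V) ∈ H := by
          have hmem := finset_mem_of_singletons hHer hempty hUfin.toFinset
            (fun u hu => hnu u ((Set.Finite.mem_toFinset hUfin).mp hu).1)
          rwa [Set.Finite.coe_toFinset] at hmem
        have hsub : G.rng e ⊆ U ∪ (G.rng e \ U) := fun x hx => by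
          by_cases hxU : x ∈ U
          · exact Or.inl hxU
          · exact Or.inr ⟨hx, hxU⟩
        exact hHer.2.2.2 _ (hHer.2.2.1 U hU _ hTfin) _ (Mem0.range e) hsub
      -- build an infinite path staying outside
      have step' : ∀ x : {v : G.V // ({v} : Set G.V) ∉ H},
          ∃ p : G.E × {v : G.V // ({v} : Set G.V) ∉ H},
            G.src p.1 = x.1 ∧ p.2.1 ∈ G.rng p.1 := by
        intro x
        obtain ⟨e, hsrc, u, hu, hun⟩ := hstep x.1 x.2
        exact ⟨(e, ⟨u, hun⟩), hsrc, hu⟩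
      choose f hf1 hf2 using step'
      let seq : ℕ → {v : G.V // ({v} : Set G.V) ∉ H} :=
        fun n => Nat.rec ⟨w₀, hw₀⟩ (fun _ x => (f x).2) n
      let α : ℕ → G.E := fun n => (f (seq n)).1
      have hseq : ∀ n, seq (n + 1) = (f (seq n)).2 := fun n => rfl
      have hpath : G.IsInfinitePath α := by
        intro i
        have hs : G.src (α (i + 1)) = (seq (i + 1)).1 := hf1 (seq (i + 1))
        rw [hs, hseq]
        exact hf2 (seq i)
      obtain ⟨i, hi⟩ := h1 α hpath v₀
      have hsi : G.src (α i) = (seq i).1 := hf1 (seq i)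
      rw [hsi] at hi
      exact (seq i).2 (hgeq _ hi)
    ext A
    constructor
    · intro hA; exact hHer.1 A hA
    · intro hA
      induction hA with
      | empty => exact hempty
      | singleton v => exact hsingle v
      | range e => exact hHer.2.1 e (hsingle _)
      | union hA hB ihA ihB => exact hHer.2.2.1 _ ihA _ ihB
      | inter hA hB ihA ihB =>
        exact hHer.2.2.2 _ ihA _ (Mem0.inter hA hB) Set.inter_subset_left

/-- Triviality implies conditions (1)-(3). -/
theorem trivial_implies (hT : G.OnlyTrivialSatHer) :
    G.CondInfPaths ∧ G.CondSingular ∧ G.CondInfRange := by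
  have hSH : ∀ w : G.V, G.SH w = G.G0 := by
    intro w
    rcases hT (G.SH w) (sh_hereditary w) (sh_saturated w) with h | h
    · have h1 := h (singleton_mem_SH w)
      rw [Set.mem_singleton_iff] at h1
      exact absurd h1 (Set.singleton_ne_empty w)
    · exact h
  refine ⟨?_, ?_, ?_⟩
  · intro α hα v
    have hm : ({G.src (α 0)} : Set G.V) ∈ G.SH v := by
      rw [hSH v]; exact Mem0.singleton _
    obtain ⟨n, hn⟩ := hm
    exact extract_inf hα n _ hn 0 (Set.mem_singleton _)
  · intro v hv w
    have hm : ({v} : Set G.V) ∈ G.SH w := by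
      rw [hSH w]; exact Mem0.singleton v
    obtain ⟨n, hn⟩ := hm
    exact extract_sing hv n _ hn (Set.mem_singleton _)
  · intro e hinf w
    have hm : G.rng e ∈ G.SH w := by
      rw [hSH w]; exact Mem0.range e
    obtain ⟨n, hn⟩ := hm
    exact extract_cofin n _ hn

end Ultragraph

/-- the saturated hereditary collections are trivial iff
conditions (1)-(3) hold. -/
theorem statement9 (G : Ultragraph) :
    G.OnlyTrivialSatHer ↔ (G.CondInfPaths ∧ G.CondSingular ∧ G.CondInfRange) := by
  constructor
  · exact fun h => Ultragraph.trivial_implies h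
  · rintro ⟨h1, h2, h3⟩
    exact Ultragraph.conditions_imply h1 h2 h3
end

section
/- Let 𝒢 be an ultragraph, K a field, and c a cycle in 𝒢 without exits with v := s(c). Then the ideal I(v) of L_K(𝒢) generated by p_v equals Span_K{ s_α s*_β : α, β ∈ 𝒢*, r(α) = {v} = r(β) }. -/
set_option maxHeartbeats 1000000
set_option synthInstance.maxHeartbeats 400000

open scoped BigOperators

namespace StatementAux

open Ultragraph

variable {K : Type} [Field K] {G : Ultragraph}

lemma lmk_rel {x y : FreeAlgebra K (LGen G)} (h : LRel K G x y) :
    lmk K G x = lmk K G y :=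
  RingQuot.mkAlgHom_rel K h

lemma coe_mul (x y : LPA K G) : ((x * y : LPA K G) : LPAEnv K G) = (x : LPAEnv K G) * y := rfl

lemma lpa_ext {x y : LPA K G} (h : (x : LPAEnv K G) = y) : x = y := Subtype.ext h

lemma p_congr {A B : Set G.V} (hA : G.Mem0 A) (hB : G.Mem0 B) (h : A = B) :
    p K G A hA = p K G B hB := by subst h; rfl

lemma p_mul {A B : Set G.V} (hA : G.Mem0 A) (hB : G.Mem0 B) :
    p K G A hA * p K G B hB = p K G (A ∩ B) (hA.inter hB) := by
  apply lpa_ext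
  show lmk K G (genP K G A hA) * lmk K G (genP K G B hB) = lmk K G (genP K G (A ∩ B) _)
  rw [← map_mul]
  exact lmk_rel (LRel.pMul hA hB)

lemma p_empty : p K G ∅ Mem0.empty = (0 : LPA K G) := by
  apply lpa_ext
  show lmk K G (genP K G ∅ Mem0.empty) = 0
  rw [lmk_rel LRel.pEmpty, map_zero]

lemma src_mul (e : G.E) :
    p K G {G.src e} (Mem0.singleton _) * se K G e = se K G e := by
  apply lpa_ext
  show lmk K G (genP K G {G.src e} _) * lmk K G (genS K G e) = lmk K G (genS K G e)
  rw [← map_mul]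
  exact lmk_rel (LRel.srcMul e)

lemma mul_rng (e : G.E) :
    se K G e * p K G (G.rng e) (Mem0.range e) = se K G e := by
  apply lpa_ext
  show lmk K G (genS K G e) * lmk K G (genP K G (G.rng e) _) = lmk K G (genS K G e)
  rw [← map_mul]
  exact lmk_rel (LRel.mulRng e)

lemma rng_star (e : G.E) :
    p K G (G.rng e) (Mem0.range e) * st K G e = st K G e := by
  apply lpa_ext
  show lmk K G (genP K G (G.rng e) _) * lmk K G (genT K G e) = lmk K G (genT K G e)
  rw [← map_mul]
  exact lmk_rel (LRel.rngStar e)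

lemma star_src (e : G.E) :
    st K G e * p K G {G.src e} (Mem0.singleton _) = st K G e := by
  apply lpa_ext
  show lmk K G (genT K G e) * lmk K G (genP K G {G.src e} _) = lmk K G (genT K G e)
  rw [← map_mul]
  exact lmk_rel (LRel.starSrc e)

lemma star_mul_same (e : G.E) :
    st K G e * se K G e = p K G (G.rng e) (Mem0.range e) := by
  apply lpa_ext
  show lmk K G (genT K G e) * lmk K G (genS K G e) = lmk K G (genP K G (G.rng e) _)
  rw [← map_mul]
  exact lmk_rel (LRel.starMulSame e)

lemma star_mul_diff {e f : G.E} (h : e ≠ f) : st K G e * se K G f = (0 : LPA K G) := by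
  apply lpa_ext
  show lmk K G (genT K G e) * lmk K G (genS K G f) = 0
  rw [← map_mul, lmk_rel (LRel.starMulDiff h), map_zero]

lemma ck (v : G.V) (h : G.IsRegular v) :
    p K G {v} (Mem0.singleton v) = ∑ e ∈ h.2.toFinset, se K G e * st K G e := by
  apply lpa_ext
  show lmk K G (genP K G {v} _) = ((∑ e ∈ h.2.toFinset, se K G e * st K G e : LPA K G) : LPAEnv K G)
  rw [lmk_rel (LRel.ck v h), map_sum]
  push_cast
  refine Finset.sum_congr rfl fun x _ => ?_
  rw [map_mul]
  rfl

end StatementAux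

namespace StatementAux

variable {K : Type} [Field K] {G : Ultragraph}

open Ultragraph

lemma pA_mul_se {A : Set G.V} (hA : G.Mem0 A) (e : G.E) (h : G.src e ∈ A) :
    p K G A hA * se K G e = se K G e := by
  rw [← src_mul e, ← mul_assoc, p_mul,
    p_congr _ (Mem0.singleton (G.src e)) (Set.inter_eq_right.2 (by simpa using h))]

lemma pA_mul_se_zero {A : Set G.V} (hA : G.Mem0 A) (e : G.E) (h : G.src e ∉ A) :
    p K G A hA * se K G e = 0 := by
  rw [← src_mul e, ← mul_assoc, p_mul, p_congr _ Mem0.empty (by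
    ext w; simp only [Set.mem_inter_iff, Set.mem_singleton_iff, Set.mem_empty_iff_false,
      iff_false, not_and]
    rintro hw rfl; exact h hw), p_empty, zero_mul]

lemma st_mul_pA {A : Set G.V} (hA : G.Mem0 A) (e : G.E) (h : G.src e ∈ A) :
    st K G e * p K G A hA = st K G e := by
  rw [← star_src e, mul_assoc, p_mul, p_congr _ (Mem0.singleton (G.src e))
    (Set.inter_eq_left.2 (by simpa using h)), star_src]

lemma st_mul_pA_zero {A : Set G.V} (hA : G.Mem0 A) (e : G.E) (h : G.src e ∉ A) :
    st K G e * p K G A hA = 0 := by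
  rw [← star_src e, mul_assoc, p_mul, p_congr _ Mem0.empty
    (Set.singleton_inter_eq_empty.2 h), p_empty, mul_zero]

lemma se_mul_pA {A : Set G.V} (hA : G.Mem0 A) (e : G.E) (h : G.rng e ⊆ A) :
    se K G e * p K G A hA = se K G e := by
  rw [← mul_rng e, mul_assoc, p_mul, p_congr _ (Mem0.range e) (Set.inter_eq_left.2 h), mul_rng]

lemma se_mul_pA_zero {A : Set G.V} (hA : G.Mem0 A) (e : G.E) (h : G.rng e ∩ A = ∅) :
    se K G e * p K G A hA = 0 := by
  rw [← mul_rng e, mul_assoc, p_mul, p_congr _ Mem0.empty h, p_empty, mul_zero]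

lemma pA_mul_st {A : Set G.V} (hA : G.Mem0 A) (e : G.E) (h : G.rng e ⊆ A) :
    p K G A hA * st K G e = st K G e := by
  rw [← rng_star e, ← mul_assoc, p_mul, p_congr _ (Mem0.range e)
    (Set.inter_eq_right.2 h), rng_star]

lemma pA_mul_st_zero {A : Set G.V} (hA : G.Mem0 A) (e : G.E) (h : A ∩ G.rng e = ∅) :
    p K G A hA * st K G e = 0 := by
  rw [← rng_star e, ← mul_assoc, p_mul, p_congr _ Mem0.empty h, p_empty, zero_mul]

lemma pv_mul_pv (v : G.V) :
    p K G {v} (Mem0.singleton v) * p K G {v} (Mem0.singleton v)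
      = p K G {v} (Mem0.singleton v) := by
  rw [p_mul, p_congr _ (Mem0.singleton v) (Set.inter_self _)]

variable {v : G.V}

lemma pA_mul_spath {A : Set G.V} (hA : G.Mem0 A) (l : List G.E) :
    p K G A hA * spath K G v l = spath K G v l ∨ p K G A hA * spath K G v l = 0 := by
  cases l with
  | nil =>
    by_cases h : v ∈ A
    · left
      show p K G A hA * p K G {v} _ = p K G {v} _
      rw [p_mul, p_congr _ (Mem0.singleton v) (Set.inter_eq_right.2 (by simpa using h))]
    · right
      show p K G A hA * p K G {v} _ = 0
      rw [p_mul, p_congr _ Mem0.empty (by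
        ext w; simp only [Set.mem_inter_iff, Set.mem_singleton_iff, Set.mem_empty_iff_false,
          iff_false, not_and]
        rintro hw rfl; exact h hw), p_empty]
  | cons e l' =>
    by_cases h : G.src e ∈ A
    · left
      show p K G A hA * (se K G e * spath K G v l') = se K G e * spath K G v l'
      rw [← mul_assoc, pA_mul_se hA e h]
    · right
      show p K G A hA * (se K G e * spath K G v l') = 0
      rw [← mul_assoc, pA_mul_se_zero hA e h, zero_mul]

lemma gpath_mul_pA {A : Set G.V} (hA : G.Mem0 A) (l : List G.E) :
    gpath K G v l * p K G A hA = gpath K G v l ∨ gpath K G v l * p K G A hA = 0 := by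
  cases l with
  | nil =>
    by_cases h : v ∈ A
    · left
      show p K G {v} _ * p K G A hA = p K G {v} _
      rw [p_mul, p_congr _ (Mem0.singleton v) (Set.inter_eq_left.2 (by simpa using h))]
    · right
      show p K G {v} _ * p K G A hA = 0
      rw [p_mul, p_congr _ Mem0.empty (Set.singleton_inter_eq_empty.2 h), p_empty]
  | cons e l' =>
    by_cases h : G.src e ∈ A
    · left
      show gpath K G v l' * st K G e * p K G A hA = gpath K G v l' * st K G e
      rw [mul_assoc, st_mul_pA hA e h]
    · right
      show gpath K G v l' * st K G e * p K G A hA = 0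
      rw [mul_assoc, st_mul_pA_zero hA e h, mul_zero]

lemma spath_mul_pv (l : List G.E) :
    spath K G v l * p K G {v} (Mem0.singleton v) = spath K G v l := by
  induction l with
  | nil => exact pv_mul_pv v
  | cons e l' ih =>
    show se K G e * spath K G v l' * p K G {v} _ = se K G e * spath K G v l'
    rw [mul_assoc, ih]

lemma pv_mul_gpath (l : List G.E) :
    p K G {v} (Mem0.singleton v) * gpath K G v l = gpath K G v l := by
  induction l with
  | nil => exact pv_mul_pv v
  | cons e l' ih =>
    show p K G {v} _ * (gpath K G v l' * st K G e) = gpath K G v l' * st K G e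
    rw [← mul_assoc, ih]

lemma spath_append (l₁ l₂ : List G.E)
    (h : p K G {v} (Mem0.singleton v) * spath K G v l₂ = spath K G v l₂) :
    spath K G v (l₁ ++ l₂) = spath K G v l₁ * spath K G v l₂ := by
  induction l₁ with
  | nil => exact h.symm
  | cons e l ih =>
    show se K G e * spath K G v (l ++ l₂) = se K G e * spath K G v l * spath K G v l₂
    rw [ih, mul_assoc]

lemma gpath_append (l₁ l₂ : List G.E)
    (h : gpath K G v l₂ * p K G {v} (Mem0.singleton v) = gpath K G v l₂) :
    gpath K G v (l₁ ++ l₂) = gpath K G v l₂ * gpath K G v l₁ := by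
  induction l₁ with
  | nil => exact h.symm
  | cons e l ih =>
    show gpath K G v (l ++ l₂) * st K G e = gpath K G v l₂ * (gpath K G v l * st K G e)
    rw [ih, mul_assoc]

end StatementAux

namespace StatementAux

variable {K : Type} [Field K] {G : Ultragraph} {v : G.V}

open Ultragraph

lemma ck_single (e : G.E) (hu : ∀ f, G.src f = G.src e → f = e) :
    p K G {G.src e} (Mem0.singleton _) = se K G e * st K G e := by
  have hemit : G.emitted (G.src e) = {e} :=
    Set.eq_singleton_iff_unique_mem.2 ⟨rfl, fun f hf => hu f hf⟩
  have hreg : G.IsRegular (G.src e) :=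
    ⟨⟨e, rfl⟩, by rw [hemit]; exact Set.finite_singleton e⟩
  have htf : hreg.2.toFinset = {e} := by
    ext f
    simp [Set.Finite.mem_toFinset, hemit]
  rw [ck (G.src e) hreg, htf, Finset.sum_singleton]

lemma cycle_pv (v : G.V) : ∀ (l : List G.E) (h : l ≠ []),
    (∀ e ∈ l, ∀ f, G.src f = G.src e → f = e) →
    l.Chain' (fun e f => G.rng e = {G.src f}) →
    G.rng (l.getLast h) = {v} →
    p K G {G.src (l.head h)} (Mem0.singleton _) = spath K G v l * gpath K G v l
  | [e], _, hu, _, hlast => by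
    have h2 : se K G e * p K G {v} (Mem0.singleton v) = se K G e :=
      se_mul_pA _ e (by rw [show G.rng e = {v} from hlast])
    have h3 : p K G {v} (Mem0.singleton v) * st K G e = st K G e :=
      pA_mul_st _ e (by rw [show G.rng e = {v} from hlast])
    show p K G {G.src e} _ = (se K G e * p K G {v} _) * (p K G {v} _ * st K G e)
    rw [h2, h3]
    exact ck_single e (hu e (List.mem_singleton_self e))
  | e :: f :: l', _, hu, hch, hlast => by
    obtain ⟨hre, hch'⟩ := List.isChain_cons_cons.1 hch
    have hlast' : G.rng ((f :: l').getLast (List.cons_ne_nil f l')) = {v} := by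
      rw [← List.getLast_cons (l := f :: l') (List.cons_ne_nil f l')]
      exact hlast
    have ih : p K G {G.src f} (Mem0.singleton _) =
        spath K G v (f :: l') * gpath K G v (f :: l') :=
      cycle_pv v (f :: l') (List.cons_ne_nil f l')
        (fun x hx => hu x (List.mem_cons_of_mem e hx)) hch' hlast'
    show p K G {G.src e} _ =
      (se K G e * spath K G v (f :: l')) * (gpath K G v (f :: l') * st K G e)
    calc p K G {G.src e} (Mem0.singleton _) = se K G e * st K G e :=
          ck_single e (hu e List.mem_cons_self)
      _ = se K G e * (p K G (G.rng e) (Mem0.range e) * st K G e) := by rw [rng_star]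
      _ = se K G e * (p K G {G.src f} (Mem0.singleton _) * st K G e) := by
          rw [p_congr (Mem0.range e) (Mem0.singleton (G.src f)) hre]
      _ = se K G e * ((spath K G v (f :: l') * gpath K G v (f :: l')) * st K G e) := by
          rw [ih]
      _ = (se K G e * spath K G v (f :: l')) * (gpath K G v (f :: l') * st K G e) := by
          rw [mul_assoc, mul_assoc]

lemma endsAt_nil : G.EndsAt [] v :=
  ⟨List.isChain_nil, fun h => absurd rfl h⟩

lemma endsAt_tail {e : G.E} {l : List G.E} (h : G.EndsAt (e :: l) v) : G.EndsAt l v := by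
  refine ⟨(List.isChain_cons.1 h.1).2, fun hl => ?_⟩
  have := h.2 (List.cons_ne_nil e l)
  rwa [List.getLast_cons hl] at this

lemma endsAt_cons {e : G.E} {l : List G.E} (hl : l ≠ []) (h : G.EndsAt l v)
    (hsrc : G.src (l.head hl) ∈ G.rng e) : G.EndsAt (e :: l) v := by
  refine ⟨List.isChain_cons.2 ⟨fun y hy => ?_, h.1⟩, fun _ => ?_⟩
  · rw [List.head?_eq_head hl] at hy
    obtain rfl : l.head hl = y := by simpa using hy
    exact hsrc
  · rw [List.getLast_cons hl]
    exact h.2 hl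

lemma endsAt_append {l₁ l₂ : List G.E} (h₁ : G.EndsAt l₁ v) (h₂ : G.EndsAt l₂ v)
    (hne₂ : l₂ ≠ []) (hh : G.src (l₂.head hne₂) = v) : G.EndsAt (l₁ ++ l₂) v := by
  refine ⟨h₁.1.append h₂.1 (fun x hx y hy => ?_), fun h => ?_⟩
  · rcases List.mem_getLast?_eq_getLast hx with ⟨hne₁, rfl⟩
    rw [List.head?_eq_head hne₂] at hy
    obtain rfl : l₂.head hne₂ = y := by simpa using hy
    rw [h₁.2 hne₁, hh]
    exact rfl
  · rw [List.getLast_append_of_ne_nil _ hne₂]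
    exact h₂.2 hne₂

end StatementAux

/-- for a cycle `c` without exits based at `v`, the ideal
generated by `p_v` is the span of the elements `s_α s*_β` with
`r(α) = {v} = r(β)`. -/
theorem statement12 (K : Type) [Field K] (G : Ultragraph) (c : List G.E)
    (hne : c ≠ []) (hpath : G.IsPathList c)
    (hcyc : G.src (c.head hne) ∈ G.rng (c.getLast hne)) (hex : ¬ G.HasExit c)
    (v : G.V) (hv : v = G.src (c.head hne))
    (I : NonUnitalSubalgebra K (Ultragraph.LPA K G))
    (hI : IsIdealGeneratedBy K (Ultragraph.LPA K G) I
      {Ultragraph.p K G {v} (Ultragraph.Mem0.singleton v)}) :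
    (I : Set (Ultragraph.LPA K G)) =
      ↑(Submodule.span K {x : Ultragraph.LPA K G | ∃ α β : List G.E,
        G.EndsAt α v ∧ G.EndsAt β v ∧
        x = Ultragraph.spath K G v α * Ultragraph.gpath K G v β}) := by
  classical
  open Ultragraph StatementAux in
  obtain ⟨c0, ctail, rfl⟩ := List.exists_cons_of_ne_nil hne
  set c' : List G.E := c0 :: ctail with hc'def
  set n : ℕ := c'.length with hndef
  have hn : 0 < n := List.length_pos_iff.2 hne
  have hsrc0 : G.src c0 = v := hv.symm
  -- basic index facts
  have hgetc : ∀ (j k : ℕ) (hj : j < n) (hk : k < n), j = k →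
      c'.get ⟨j, hj⟩ = c'.get ⟨k, hk⟩ := fun j k hj hk h => by subst h; rfl
  have hlastidx : c'.getLast hne = c'.get ⟨n - 1, by omega⟩ := List.getLast_eq_getElem hne
  -- consequences of no exits
  have hexit : ∀ (i : Fin c'.length) (f : G.E), G.src f ∈ G.rng (c'.get i) →
      f = c'.get ⟨((i : ℕ) + 1) % c'.length, Nat.mod_lt _ i.pos⟩ := by
    intro i f hf
    by_contra hne'
    exact hex ⟨i, Or.inl ⟨f, hf, hne'⟩⟩
  have hnosink : ∀ (i : Fin c'.length), ∀ w ∈ G.rng (c'.get i), ¬ G.IsSink w := by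
    intro i w hw hs
    exact hex ⟨i, Or.inr ⟨w, hw, hs⟩⟩
  have hsucc : ∀ (i : Fin c'.length), ∀ w ∈ G.rng (c'.get i),
      w = G.src (c'.get ⟨((i : ℕ) + 1) % c'.length, Nat.mod_lt _ i.pos⟩) := by
    intro i w hw
    have hnsne : G.emitted w ≠ ∅ := hnosink i w hw
    obtain ⟨f, hfw⟩ := Set.nonempty_iff_ne_empty.2 hnsne
    have hfw' : G.src f = w := hfw
    have := hexit i f (by rw [hfw']; exact hw)
    rw [← hfw', this]
  -- cycle structure facts
  have hc3 : G.rng (c'.getLast hne) = {v} := by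
    apply Set.eq_singleton_iff_unique_mem.2
    refine ⟨hv ▸ hcyc, ?_⟩
    intro w hw
    rw [hlastidx] at hw
    have hw' := hsucc ⟨n - 1, by omega⟩ w hw
    rw [hw', hv]
    apply congrArg
    have hidx : (n - 1 + 1) % n = 0 := by
      have h1 : n - 1 + 1 = n := by omega
      rw [h1, Nat.mod_self]
    exact hgetc _ _ (Nat.mod_lt _ hn) hn hidx
  have hc2 : c'.Chain' (fun e f => G.rng e = {G.src f}) := by
    refine List.isChain_iff_getElem.2 ?_
    intro i hi
    apply Set.eq_singleton_iff_unique_mem.2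
    refine ⟨List.isChain_iff_getElem.1 hpath i hi, ?_⟩
    intro w hw
    have hw' := hsucc ⟨i, by omega⟩ w hw
    rw [hw']
    apply congrArg
    exact hgetc _ _ (Nat.mod_lt _ hn) (by omega)
      (Nat.mod_eq_of_lt (show i + 1 < n by omega))
  have hc1 : ∀ e ∈ c', ∀ f, G.src f = G.src e → f = e := by
    intro e he f hf
    obtain ⟨j, hj⟩ := List.mem_iff_get.1 he
    rcases Nat.eq_zero_or_pos j.val with h0 | hpos
    · have he0 : e = c'.get ⟨0, hn⟩ := by rw [← hj]; exact hgetc _ _ j.isLt hn h0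
      have hsrce : G.src f ∈ G.rng (c'.get ⟨n - 1, by omega⟩) := by
        rw [hf, he0, ← hlastidx]
        exact hcyc
      have hfe := hexit ⟨n - 1, by omega⟩ f hsrce
      rw [hfe, he0]
      exact hgetc _ _ (Nat.mod_lt _ hn) hn
        (show (n - 1 + 1) % n = 0 by rw [show n - 1 + 1 = n by omega, Nat.mod_self])
    · have hsrce : G.src f ∈ G.rng (c'.get ⟨j.val - 1, by omega⟩) := by
        rw [hf, ← hj]
        have hch : G.src (c'.get ⟨j.val - 1 + 1, by omega⟩) ∈
            G.rng (c'.get ⟨j.val - 1, by omega⟩) := List.isChain_iff_getElem.1 hpath (j.val - 1) (by omega)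
        have heq : c'.get ⟨j.val - 1 + 1, by omega⟩ = c'.get j :=
          hgetc _ _ _ j.isLt (by omega)
        rwa [heq] at hch
      have hfe := hexit ⟨j.val - 1, by omega⟩ f hsrce
      rw [hfe, ← hj]
      exact hgetc _ _ (Nat.mod_lt _ hn) j.isLt
        (show (j.val - 1 + 1) % n = j.val by
          rw [show j.val - 1 + 1 = j.val by omega, Nat.mod_eq_of_lt j.isLt])
  -- p_v = s_c s*_c
  have pvcc : Ultragraph.p K G {v} (Ultragraph.Mem0.singleton v) =
      Ultragraph.spath K G v c' * Ultragraph.gpath K G v c' := by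
    have h := cycle_pv (K := K) v c' hne hc1 hc2 hc3
    have h2 : Ultragraph.p K G {v} (Ultragraph.Mem0.singleton v) =
        Ultragraph.p K G {G.src (c'.head hne)} (Ultragraph.Mem0.singleton _) :=
      p_congr _ _ (by rw [hv])
    rw [h2]
    exact h
  -- projections on the cycle
  have hpvc : Ultragraph.p K G {v} (Ultragraph.Mem0.singleton v) *
      Ultragraph.spath K G v c' = Ultragraph.spath K G v c' := by
    show Ultragraph.p K G {v} (Ultragraph.Mem0.singleton v) *
      (Ultragraph.se K G c0 * Ultragraph.spath K G v ctail) = _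
    rw [← mul_assoc, pA_mul_se (Ultragraph.Mem0.singleton v) c0 (by rw [hsrc0]; rfl)]
    rfl
  have hcpv : Ultragraph.gpath K G v c' *
      Ultragraph.p K G {v} (Ultragraph.Mem0.singleton v) = Ultragraph.gpath K G v c' := by
    show Ultragraph.gpath K G v ctail * Ultragraph.st K G c0 *
      Ultragraph.p K G {v} (Ultragraph.Mem0.singleton v) = _
    rw [mul_assoc, st_mul_pA (Ultragraph.Mem0.singleton v) c0 (by rw [hsrc0]; rfl)]
    rfl
  have hEc : G.EndsAt c' v := ⟨hpath, fun _ => hc3⟩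
  -- the spanning set
  set S : Set (Ultragraph.LPA K G) := {x : Ultragraph.LPA K G | ∃ α β : List G.E,
      G.EndsAt α v ∧ G.EndsAt β v ∧
      x = Ultragraph.spath K G v α * Ultragraph.gpath K G v β} with hSdef
  set M : Submodule K (Ultragraph.LPA K G) := Submodule.span K S with hMdef
  have hmemS : ∀ {α β : List G.E}, G.EndsAt α v → G.EndsAt β v →
      Ultragraph.spath K G v α * Ultragraph.gpath K G v β ∈ S := by
    intro α β hα hβ
    rw [hSdef]
    exact ⟨α, β, hα, hβ, rfl⟩
  -- padding with the cycle
  have hpad : ∀ (α β : List G.E), G.EndsAt α v → G.EndsAt β v →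
      Ultragraph.spath K G v α * Ultragraph.gpath K G v β =
        Ultragraph.spath K G v (α ++ c') * Ultragraph.gpath K G v (β ++ c') := by
    intro α β hα hβ
    calc Ultragraph.spath K G v α * Ultragraph.gpath K G v β
        = (Ultragraph.spath K G v α * Ultragraph.p K G {v} (Ultragraph.Mem0.singleton v)) *
          Ultragraph.gpath K G v β := by rw [spath_mul_pv]
      _ = (Ultragraph.spath K G v α *
            (Ultragraph.spath K G v c' * Ultragraph.gpath K G v c')) *
          Ultragraph.gpath K G v β := by rw [pvcc]
      _ = (Ultragraph.spath K G v α * Ultragraph.spath K G v c') *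
          (Ultragraph.gpath K G v c' * Ultragraph.gpath K G v β) := by
            rw [← mul_assoc (Ultragraph.spath K G v α), mul_assoc]
      _ = Ultragraph.spath K G v (α ++ c') * Ultragraph.gpath K G v (β ++ c') := by
            rw [spath_append α c' hpvc, gpath_append β c' hcpv]
  have hpadEnds : ∀ {γ : List G.E}, G.EndsAt γ v → G.EndsAt (γ ++ c') v :=
    fun hγ => endsAt_append hγ hEc hne hsrc0
  -- generator stability of the span
  have hgenS : ∀ (g : Ultragraph.LGen G) (hg : Ultragraph.lmk K G (FreeAlgebra.ι K g) ∈
      Ultragraph.LPAsub K G) (x : Ultragraph.LPA K G), x ∈ S →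
      (⟨Ultragraph.lmk K G (FreeAlgebra.ι K g), hg⟩ : Ultragraph.LPA K G) * x ∈ M ∧
      x * ⟨Ultragraph.lmk K G (FreeAlgebra.ι K g), hg⟩ ∈ M := by
    rintro g hg x hx
    rw [hSdef] at hx
    obtain ⟨α, β, hα, hβ, rfl⟩ := hx
    rw [hpad α β hα hβ]
    have hα' : G.EndsAt (α ++ c') v := hpadEnds hα
    have hβ' : G.EndsAt (β ++ c') v := hpadEnds hβ
    obtain ⟨a, as, hαeq⟩ := List.exists_cons_of_ne_nil
      (show α ++ c' ≠ [] by simp [hc'def])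
    obtain ⟨b, bs, hβeq⟩ := List.exists_cons_of_ne_nil
      (show β ++ c' ≠ [] by simp [hc'def])
    rw [hαeq] at hα' ⊢
    rw [hβeq] at hβ' ⊢
    cases g with
    | pr A =>
      constructor
      · show Ultragraph.p K G A.1 A.2 * _ ∈ M
        rcases pA_mul_spath (K := K) (v := v) A.2 (a :: as) with h | h
        · rw [← mul_assoc, h]
          exact Submodule.subset_span (hmemS hα' hβ')
        · rw [← mul_assoc, h, zero_mul]
          exact zero_mem M
      · show _ * Ultragraph.p K G A.1 A.2 ∈ M
        rcases gpath_mul_pA (K := K) (v := v) A.2 (b :: bs) with h | h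
        · rw [mul_assoc, h]
          exact Submodule.subset_span (hmemS hα' hβ')
        · rw [mul_assoc, h, mul_zero]
          exact zero_mem M
    | ed e =>
      constructor
      · show Ultragraph.se K G e * _ ∈ M
        by_cases hsa : G.src a ∈ G.rng e
        · rw [← mul_assoc]
          exact Submodule.subset_span
            (hmemS (endsAt_cons (List.cons_ne_nil a as) hα' hsa) hβ')
        · have hz : Ultragraph.se K G e * Ultragraph.spath K G v (a :: as) = 0 := by
            show Ultragraph.se K G e * (Ultragraph.se K G a * Ultragraph.spath K G v as) = 0
            rw [← src_mul a, ← mul_assoc, ← mul_assoc,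
              se_mul_pA_zero _ e (Set.inter_singleton_eq_empty.2 hsa), zero_mul, zero_mul]
          rw [← mul_assoc, hz, zero_mul]
          exact zero_mem M
      · show _ * Ultragraph.se K G e ∈ M
        by_cases hbe : b = e
        · subst hbe
          have hgb : Ultragraph.gpath K G v (b :: bs) * Ultragraph.se K G b =
              Ultragraph.gpath K G v bs * Ultragraph.p K G (G.rng b) (Ultragraph.Mem0.range b) := by
            show Ultragraph.gpath K G v bs * Ultragraph.st K G b * Ultragraph.se K G b = _
            rw [mul_assoc, star_mul_same]
          rw [mul_assoc, hgb]
          rcases gpath_mul_pA (K := K) (v := v) (Ultragraph.Mem0.range b) bs with h | h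
          · rw [h]
            exact Submodule.subset_span (hmemS hα' (endsAt_tail hβ'))
          · rw [h, mul_zero]
            exact zero_mem M
        · have hz : Ultragraph.gpath K G v (b :: bs) * Ultragraph.se K G e = 0 := by
            show Ultragraph.gpath K G v bs * Ultragraph.st K G b * Ultragraph.se K G e = 0
            rw [mul_assoc, star_mul_diff hbe, mul_zero]
          rw [mul_assoc, hz, mul_zero]
          exact zero_mem M
    | st e =>
      constructor
      · show Ultragraph.st K G e * _ ∈ M
        by_cases hea : e = a
        · subst hea
          have hz : Ultragraph.st K G e * Ultragraph.spath K G v (e :: as) =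
              Ultragraph.p K G (G.rng e) (Ultragraph.Mem0.range e) * Ultragraph.spath K G v as := by
            show Ultragraph.st K G e * (Ultragraph.se K G e * Ultragraph.spath K G v as) = _
            rw [← mul_assoc, star_mul_same]
          rw [← mul_assoc, hz]
          rcases pA_mul_spath (K := K) (v := v) (Ultragraph.Mem0.range e) as with h | h
          · rw [h]
            exact Submodule.subset_span (hmemS (endsAt_tail hα') hβ')
          · rw [h, zero_mul]
            exact zero_mem M
        · have hz : Ultragraph.st K G e * Ultragraph.spath K G v (a :: as) = 0 := by
            show Ultragraph.st K G e * (Ultragraph.se K G a * Ultragraph.spath K G v as) = 0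
            rw [← mul_assoc, star_mul_diff hea, zero_mul]
          rw [← mul_assoc, hz, zero_mul]
          exact zero_mem M
      · show _ * Ultragraph.st K G e ∈ M
        by_cases hsb : G.src b ∈ G.rng e
        · rw [mul_assoc]
          exact Submodule.subset_span
            (hmemS hα' (endsAt_cons (List.cons_ne_nil b bs) hβ' hsb))
        · have hz : Ultragraph.gpath K G v (b :: bs) * Ultragraph.st K G e = 0 := by
            show Ultragraph.gpath K G v bs * Ultragraph.st K G b * Ultragraph.st K G e = 0
            rw [← rng_star e, ← mul_assoc, mul_assoc (Ultragraph.gpath K G v bs),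
              st_mul_pA_zero (Ultragraph.Mem0.range e) b hsb, mul_zero, zero_mul]
          rw [mul_assoc, hz, mul_zero]
          exact zero_mem M
  -- generator stability extends to all of M
  have hgenM : ∀ (g : Ultragraph.LGen G) (hg : Ultragraph.lmk K G (FreeAlgebra.ι K g) ∈
      Ultragraph.LPAsub K G) (x : Ultragraph.LPA K G), x ∈ M →
      (⟨Ultragraph.lmk K G (FreeAlgebra.ι K g), hg⟩ : Ultragraph.LPA K G) * x ∈ M ∧
      x * ⟨Ultragraph.lmk K G (FreeAlgebra.ι K g), hg⟩ ∈ M := by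
    intro g hg x hx
    rw [hMdef] at hx
    refine Submodule.span_induction
      (p := fun x _ => (⟨Ultragraph.lmk K G (FreeAlgebra.ι K g), hg⟩ : Ultragraph.LPA K G) * x ∈ M ∧
        x * ⟨Ultragraph.lmk K G (FreeAlgebra.ι K g), hg⟩ ∈ M) ?_ ?_ ?_ ?_ hx
    · exact fun y hy => hgenS g hg y hy
    · exact ⟨by rw [mul_zero]; exact zero_mem M, by rw [zero_mul]; exact zero_mem M⟩
    · intro y z _ _ hy hz
      exact ⟨by rw [mul_add]; exact add_mem hy.1 hz.1,
        by rw [add_mul]; exact add_mem hy.2 hz.2⟩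
    · intro r y _ hy
      exact ⟨by rw [mul_smul_comm]; exact Submodule.smul_mem M r hy.1,
        by rw [smul_mul_assoc]; exact Submodule.smul_mem M r hy.2⟩
  -- every element of the algebra stabilizes M
  have habs : ∀ (y : Ultragraph.LPAEnv K G) (hy : y ∈ Ultragraph.LPAsub K G),
      ∀ x ∈ M, (⟨y, hy⟩ : Ultragraph.LPA K G) * x ∈ M ∧
        x * (⟨y, hy⟩ : Ultragraph.LPA K G) ∈ M := by
    intro y hy
    refine NonUnitalAlgebra.adjoin_induction
      (s := Set.range fun g : Ultragraph.LGen G => Ultragraph.lmk K G (FreeAlgebra.ι K g))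
      (p := fun y hy => ∀ x ∈ M, (⟨y, hy⟩ : Ultragraph.LPA K G) * x ∈ M ∧
        x * (⟨y, hy⟩ : Ultragraph.LPA K G) ∈ M) ?_ ?_ ?_ ?_ ?_ hy
    · rintro y ⟨g, rfl⟩ x hx
      exact hgenM g (NonUnitalAlgebra.subset_adjoin K ⟨g, rfl⟩) x hx
    · intro y z hy hz ihy ihz x hx
      have e1 : (⟨y + z, add_mem hy hz⟩ : Ultragraph.LPA K G) = ⟨y, hy⟩ + ⟨z, hz⟩ := rfl
      rw [e1]
      exact ⟨by rw [add_mul]; exact add_mem (ihy x hx).1 (ihz x hx).1,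
        by rw [mul_add]; exact add_mem (ihy x hx).2 (ihz x hx).2⟩
    · intro x hx
      have e1 : (⟨(0 : Ultragraph.LPAEnv K G), zero_mem _⟩ : Ultragraph.LPA K G) = 0 := rfl
      rw [e1]
      exact ⟨by rw [zero_mul]; exact zero_mem M, by rw [mul_zero]; exact zero_mem M⟩
    · intro y z hy hz ihy ihz x hx
      have e1 : (⟨y * z, mul_mem hy hz⟩ : Ultragraph.LPA K G) = ⟨y, hy⟩ * ⟨z, hz⟩ := rfl
      rw [e1]
      refine ⟨?_, ?_⟩
      · rw [mul_assoc]
        exact (ihy _ ((ihz x hx).1)).1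
      · rw [← mul_assoc]
        exact (ihz _ ((ihy x hx).2)).2
    · intro r y hy ihy x hx
      have e1 : (⟨r • y, SMulMemClass.smul_mem r hy⟩ : Ultragraph.LPA K G) = r • ⟨y, hy⟩ := rfl
      rw [e1]
      exact ⟨by rw [smul_mul_assoc]; exact Submodule.smul_mem M r (ihy x hx).1,
        by rw [mul_smul_comm]; exact Submodule.smul_mem M r (ihy x hx).2⟩
  have habs' : ∀ (a : Ultragraph.LPA K G), ∀ x ∈ M, a * x ∈ M ∧ x * a ∈ M :=
    fun a => habs a.1 a.2
  -- M as a non-unital subalgebra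
  let J : NonUnitalSubalgebra K (Ultragraph.LPA K G) :=
    Submodule.toNonUnitalSubalgebra M (fun x y hx hy => (habs' x y hy).1)
  have hpvS : Ultragraph.p K G {v} (Ultragraph.Mem0.singleton v) ∈ S := by
    rw [hSdef]
    exact ⟨[], [], endsAt_nil, endsAt_nil, (pv_mul_pv v).symm⟩
  have hpvM : Ultragraph.p K G {v} (Ultragraph.Mem0.singleton v) ∈ M :=
    Submodule.subset_span hpvS
  have hsubJ : ({Ultragraph.p K G {v} (Ultragraph.Mem0.singleton v)} :
      Set (Ultragraph.LPA K G)) ⊆ ↑J := by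
    intro x hx
    rw [Set.mem_singleton_iff] at hx
    subst hx
    exact hpvM
  have habsJ : ∀ x ∈ J, ∀ a : Ultragraph.LPA K G, a * x ∈ J ∧ x * a ∈ J :=
    fun x hx a => habs' a x hx
  have hIJ : I ≤ J := hI.2.2 J hsubJ habsJ
  -- conclusion
  apply Set.Subset.antisymm
  · intro x hx
    exact hIJ hx
  · intro x hx
    refine Submodule.span_induction (p := fun x _ => x ∈ I) ?_ ?_ ?_ ?_ hx
    · rintro y hy
      rw [hSdef] at hy
      obtain ⟨α, β, hα, hβ, rfl⟩ := hy
      have hpvI : Ultragraph.p K G {v} (Ultragraph.Mem0.singleton v) ∈ I := hI.1 rfl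
      have h1 := (hI.2.1 _ hpvI (Ultragraph.gpath K G v β)).2
      have h2 := (hI.2.1 _ h1 (Ultragraph.spath K G v α)).1
      rwa [← mul_assoc, spath_mul_pv] at h2
    · exact zero_mem I
    · exact fun y z _ _ hy hz => add_mem hy hz
    · exact fun r y _ hy => SMulMemClass.smul_mem r hy
end

section
/- Let 𝒢 be an ultragraph with only trivial saturated hereditary subsets (∅ and 𝒢⁰) and suppose 𝒢 contains exactly one cycle c. Then c has no exits. -/
set_option maxHeartbeats 1000000
set_option synthInstance.maxHeartbeats 400000

open scoped BigOperators

/-- `𝒢` has exactly one cycle (up to its set of edges). -/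
def HasExactlyOneCycle (G : Ultragraph) : Prop :=
  ∃ c : List G.E, G.IsCycle c ∧
    ∀ c' : List G.E, G.IsCycle c' → ∀ e : G.E, (e ∈ c' ↔ e ∈ c)

namespace Ultragraph

variable {G : Ultragraph}

private lemma aux_get_congr {α : Type} (l : List α) {a b : ℕ} (ha : a < l.length)
    (hb : b < l.length) (hab : a = b) : l.get ⟨a, ha⟩ = l.get ⟨b, hb⟩ := by
  subst hab; rfl

/-- Cyclic indexing into a list of edges. -/
private def cg (c : List G.E) (hn : 0 < c.length) (x : ℕ) : G.E :=
  c.get ⟨x % c.length, Nat.mod_lt _ hn⟩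

private lemma cg_eq_get (c : List G.E) (hn : 0 < c.length) {j : ℕ} (hj : j < c.length) :
    cg c hn j = c.get ⟨j, hj⟩ :=
  aux_get_congr c _ _ (Nat.mod_eq_of_lt hj)

private lemma cg_mem (c : List G.E) (hn : 0 < c.length) (x : ℕ) : cg c hn x ∈ c :=
  List.get_mem _ _

private lemma cg_period (c : List G.E) (hn : 0 < c.length) (x : ℕ) :
    cg c hn (x + c.length) = cg c hn x :=
  aux_get_congr c _ _ (Nat.add_mod_right x c.length)

private lemma cg_chain {c : List G.E} (hc : G.IsCycle c) (hn : 0 < c.length) (x : ℕ) :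
    G.src (cg c hn (x + 1)) ∈ G.rng (cg c hn x) := by
  obtain ⟨hne, hpath, hlast⟩ := hc
  have hm : x % c.length < c.length := Nat.mod_lt _ hn
  by_cases h : x % c.length + 1 < c.length
  · have h1 : (x + 1) % c.length = x % c.length + 1 := by
      rw [← Nat.mod_add_mod]; exact Nat.mod_eq_of_lt h
    show G.src (c.get ⟨(x+1) % c.length, _⟩) ∈ G.rng (c.get ⟨x % c.length, _⟩)
    rw [aux_get_congr c _ (by omega) h1]
    exact (List.isChain_iff_getElem.mp hpath) (x % c.length) (by omega)
  · have h1 : (x + 1) % c.length = 0 := by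
      rw [← Nat.mod_add_mod]
      have : x % c.length + 1 = c.length := by omega
      rw [this, Nat.mod_self]
    show G.src (c.get ⟨(x+1) % c.length, _⟩) ∈ G.rng (c.get ⟨x % c.length, _⟩)
    rw [aux_get_congr c _ (by omega) h1, List.get_mk_zero,
        aux_get_congr c _ (by omega) (show x % c.length = c.length - 1 by omega)]
    rw [List.getLast_eq_getElem] at hlast
    exact hlast

/-- Segment of a cycle: `m` consecutive edges starting at cyclic position `s`. -/
private def seg (c : List G.E) (hn : 0 < c.length) (s m : ℕ) : List G.E :=
  List.ofFn fun t : Fin m => cg c hn (s + t)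

private lemma seg_length (c : List G.E) (hn : 0 < c.length) (s m : ℕ) :
    (seg c hn s m).length = m := List.length_ofFn

private lemma seg_ne_nil (c : List G.E) (hn : 0 < c.length) (s : ℕ) {m : ℕ} (hm : 0 < m) :
    seg c hn s m ≠ [] := by
  intro h
  have := seg_length c hn s m
  rw [h] at this
  simp at this; omega

private lemma seg_get (c : List G.E) (hn : 0 < c.length) (s m : ℕ) {t : ℕ}
    (ht : t < (seg c hn s m).length) :
    (seg c hn s m).get ⟨t, ht⟩ = cg c hn (s + t) := by
  simp [seg, List.get_ofFn]

private lemma seg_head (c : List G.E) (hn : 0 < c.length) (s : ℕ) {m : ℕ} (hm : 0 < m)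
    (h : seg c hn s m ≠ []) : (seg c hn s m).head h = cg c hn s := by
  have h0 : 0 < (seg c hn s m).length := by rw [seg_length]; exact hm
  have := List.get_mk_zero h0
  rw [show (seg c hn s m).head h = (seg c hn s m).head _ from rfl] at *
  rw [← this, seg_get]
  rfl

private lemma seg_getLast (c : List G.E) (hn : 0 < c.length) (s : ℕ) {m : ℕ} (hm : 0 < m)
    (h : seg c hn s m ≠ []) : (seg c hn s m).getLast h = cg c hn (s + (m - 1)) := by
  rw [List.getLast_eq_getElem]; refine (seg_get c hn s m _).trans ?_
  congr 1
  rw [seg_length]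

private lemma seg_path {c : List G.E} (hc : G.IsCycle c) (hn : 0 < c.length) (s m : ℕ) :
    G.IsPathList (seg c hn s m) := by
  rw [IsPathList, List.Chain', List.isChain_iff_getElem]
  intro t ht
  show G.src ((seg c hn s m).get ⟨t+1, ht⟩) ∈ G.rng ((seg c hn s m).get ⟨t, by omega⟩)
  rw [seg_get, seg_get]
  have := cg_chain hc hn (s + t)
  rwa [show s + t + 1 = s + (t + 1) by omega] at this

private lemma seg_cycle {c : List G.E} (hc : G.IsCycle c) (hn : 0 < c.length) {s m : ℕ}
    (hm : 0 < m) (h : G.src (cg c hn s) ∈ G.rng (cg c hn (s + (m - 1)))) :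
    G.IsCycle (seg c hn s m) := by
  refine ⟨seg_ne_nil c hn s hm, seg_path hc hn s m, ?_⟩
  rw [seg_head c hn s hm, seg_getLast c hn s hm]
  exact h

private lemma seg_mem (c : List G.E) (hn : 0 < c.length) (s m : ℕ) (e : G.E) :
    e ∈ seg c hn s m ↔ ∃ t, t < m ∧ e = cg c hn (s + t) := by
  rw [seg, List.mem_ofFn]
  constructor
  · rintro ⟨t, rfl⟩; exact ⟨t.1, t.2, rfl⟩
  · rintro ⟨t, ht, rfl⟩; exact ⟨⟨t, ht⟩, rfl⟩

/-- Every vertex reaches the cycle, assuming only trivial sat-her collections. -/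
private lemma reach_all (G : Ultragraph) (h1 : G.OnlyTrivialSatHer)
    {c : List G.E} (hc : G.IsCycle c) (v : G.V) :
    ∃ e ∈ c, G.Geq v (G.src e) := by
  classical
  obtain ⟨hne, hpath, hlast⟩ := hc
  have hn : 0 < c.length := List.length_pos_iff.2 hne
  set R : G.V → Prop := fun w => ∃ e ∈ c, G.Geq w (G.src e) with hR
  set H : Set (Set G.V) := {A | G.Mem0 A ∧ ∀ w ∈ A, ¬ R w} with hH
  have hher : G.Hereditary H := by
    refine ⟨fun A hA => hA.1, ?_, ?_, ?_⟩
    · rintro e he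
      refine ⟨Mem0.range e, fun w hw hRw => ?_⟩
      obtain ⟨e', he', A, hA, hmem⟩ := hRw
      refine he.2 (G.src e) rfl ⟨e', he', ?_⟩
      rcases hA with rfl | ⟨l, hl, hpl, hhead, rfl⟩
      · -- src e' = w ∈ rng e; use path [e]
        refine ⟨G.rng e, Or.inr ⟨[e], by simp, List.isChain_singleton e, rfl, rfl⟩, ?_⟩
        rw [Set.mem_singleton_iff] at hmem
        rw [hmem]; exact hw
      · -- path l from w; use e :: l
        refine ⟨G.rng (l.getLast hl), Or.inr ⟨e :: l, by simp, ?_, ?_, ?_⟩, hmem⟩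
        · rw [IsPathList, List.Chain', List.isChain_cons]
          refine ⟨fun y hy => ?_, hpl⟩
          rw [List.head?_eq_head hl] at hy
          cases hy
          rw [hhead]; exact hw
        · rfl
        · rw [List.getLast_cons hl]
    · rintro A hA B hB
      exact ⟨hA.1.union hB.1, fun w hw => hw.elim (hA.2 w) (hB.2 w)⟩
    · rintro A hA B hB hBA
      exact ⟨hB, fun w hw => hA.2 w (hBA hw)⟩
  have hsat : G.Saturated H := by
    intro v hreg hall
    refine ⟨Mem0.singleton v, ?_⟩
    rintro w hw hRw
    rw [Set.mem_singleton_iff] at hw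
    subst hw
    obtain ⟨e', he', A, hA, hmem⟩ := hRw
    rcases hA with rfl | ⟨l, hl, hpl, hhead, rfl⟩
    · rw [Set.mem_singleton_iff] at hmem
      -- src e' = w, so e' is emitted from w; rng e' ∈ H but contains a reaching vertex
      have hre' : G.rng e' ∈ H := hall e' hmem
      obtain ⟨k, hk⟩ := List.mem_iff_get.mp he'
      have he'cg : e' = cg c hn k.1 := by rw [cg_eq_get c hn k.2]; exact hk.symm
      refine hre'.2 (G.src (cg c hn (k.1 + 1))) ?_ ?_
      · rw [he'cg]; exact cg_chain ⟨hne, hpath, hlast⟩ hn k.1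
      · exact ⟨cg c hn (k.1 + 1), cg_mem c hn _, {G.src (cg c hn (k.1 + 1))}, Or.inl rfl, rfl⟩
    · match l, hl, hpl, hhead, hmem with
      | [e₀], _, hpl, hhead, hmem =>
        have hre : G.rng e₀ ∈ H := hall e₀ hhead
        exact hre.2 (G.src e') hmem ⟨e', he', {G.src e'}, Or.inl rfl, rfl⟩
      | e₀ :: e₁ :: l'', _, hpl, hhead, hmem =>
        have hre : G.rng e₀ ∈ H := hall e₀ hhead
        rw [IsPathList, List.Chain', List.isChain_cons_cons] at hpl
        refine hre.2 (G.src e₁) hpl.1 ⟨e', he', G.rng ((e₁ :: l'').getLast (by simp)),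
          Or.inr ⟨e₁ :: l'', by simp, hpl.2, rfl, rfl⟩, ?_⟩
        rwa [List.getLast_cons (by simp : (e₁ :: l'') ≠ [])] at hmem
  rcases h1 H hher hsat with hsub | heq
  · by_contra hnR
    have : ({v} : Set G.V) ∈ H := ⟨Mem0.singleton v, by
      rintro w hw
      rw [Set.mem_singleton_iff] at hw
      subst hw
      exact hnR⟩
    have := hsub this
    simp only [Set.mem_singleton_iff] at this
    exact (Set.singleton_ne_empty v) this
  · exfalso
    have hmem : ({G.src (c.head hne)} : Set G.V) ∈ H := by
      rw [heq]; exact Mem0.singleton _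
    exact hmem.2 (G.src (c.head hne)) rfl
      ⟨c.head hne, List.head_mem hne, {G.src (c.head hne)}, Or.inl rfl, rfl⟩

private lemma sink_no_reach (G : Ultragraph) {w : G.V} (hsink : G.IsSink w)
    {c : List G.E} (hr : ∃ e ∈ c, G.Geq w (G.src e)) : False := by
  obtain ⟨e', _, A, hA, hmem⟩ := hr
  rcases hA with rfl | ⟨l, hl, _, hhead, rfl⟩
  · rw [Set.mem_singleton_iff] at hmem
    have : e' ∈ G.emitted w := hmem
    rw [hsink] at this
    exact this
  · have : l.head hl ∈ G.emitted w := hhead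
    rw [hsink] at this
    exact this

private theorem statement16_aux (G : Ultragraph) (h1 : G.OnlyTrivialSatHer)
    (h2 : HasExactlyOneCycle G) :
    ∀ c : List G.E, G.IsCycle c → ¬ G.HasExit c := by
  classical
  intro c hcyc hexit
  obtain ⟨i, hor⟩ := hexit
  have hn : 0 < c.length := i.pos
  rcases hor with ⟨f, hsf, hfneq⟩ | ⟨w, hw, hsink⟩
  · -- edge exit case
    obtain ⟨i₀, hi₀lt⟩ := i
    have hgi : c.get ⟨i₀, hi₀lt⟩ = cg c hn i₀ := (cg_eq_get c hn hi₀lt).symm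
    have hsf' : G.src f ∈ G.rng (cg c hn i₀) := by rwa [hgi] at hsf
    have hfneq' : f ≠ cg c hn (i₀ + 1) := hfneq
    obtain ⟨c₂, hc₂, huniq⟩ := h2
    -- Step 1 : f ∈ c
    obtain ⟨u, hu⟩ := G.rng_nonempty f
    obtain ⟨e', he', A, hA, hmem⟩ := reach_all G h1 hcyc u
    obtain ⟨k, hk⟩ := List.mem_iff_get.mp he'
    have he'cg : e' = cg c hn k.1 := by rw [cg_eq_get c hn k.2]; exact hk.symm
    set j := (k : ℕ) with hj
    set m := i₀ + c.length + 1 - j with hm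
    have hm1 : 0 < m := by have := k.2; omega
    set T := seg c hn j m with hT
    have hTne : T ≠ [] := seg_ne_nil c hn j hm1
    have hThead : T.head hTne = cg c hn j := seg_head c hn j hm1 hTne
    have hTlast : T.getLast hTne = cg c hn i₀ := by
      rw [seg_getLast c hn j hm1 hTne]
      rw [show j + (m - 1) = i₀ + c.length by have := k.2; omega]
      exact cg_period c hn i₀
    have hTpath : G.IsPathList T := seg_path hcyc hn j m
    have hfc : f ∈ c := by
      have hfD : ∃ D : List G.E, G.IsCycle D ∧ f ∈ D := by
        rcases hA with rfl | ⟨l, hl, hpl, hhead, rfl⟩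
        · -- src e' = u ∈ rng f ; D = f :: T
          rw [Set.mem_singleton_iff] at hmem
          refine ⟨f :: T, ⟨by simp, ?_, ?_⟩, List.mem_cons_self⟩
          · rw [IsPathList, List.Chain', List.isChain_cons]
            refine ⟨fun y hy => ?_, hTpath⟩
            rw [List.head?_eq_head hTne] at hy
            cases hy
            rw [hThead, ← he'cg, hmem]
            exact hu
          · rw [List.head_cons, List.getLast_cons hTne, hTlast]
            exact hsf'
        · -- path l from u, then T ; D = f :: (l ++ T)
          have hlT : l ++ T ≠ [] := by simp [hTne]
          refine ⟨f :: (l ++ T), ⟨by simp, ?_, ?_⟩, List.mem_cons_self⟩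
          · rw [IsPathList, List.Chain', List.isChain_cons]
            constructor
            · intro y hy
              rw [List.head?_append_of_ne_nil _ hl, List.head?_eq_head hl] at hy
              cases hy
              rw [hhead]
              exact hu
            · rw [List.isChain_append]
              refine ⟨hpl, hTpath, ?_⟩
              intro x hx y hy
              rw [List.getLast?_eq_getLast hl] at hx
              rw [List.head?_eq_head hTne] at hy
              cases hx; cases hy
              rw [hThead, ← he'cg]
              exact hmem
          · rw [List.head_cons]
            have : (f :: (l ++ T)).getLast (by simp) = T.getLast hTne := by
              rw [List.getLast_cons hlT, List.getLast_append]
              simp [List.isEmpty_iff, hTne]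
            rw [this, hTlast]
            exact hsf'
      obtain ⟨D, hD, hfD'⟩ := hfD
      exact (huniq c hcyc f).mpr ((huniq D hD f).mp hfD')
    -- Step 2 : minimal segment argument
    set n := c.length with hnn
    set P : ℕ → Prop := fun d => 1 ≤ d ∧ d ≤ n ∧
      G.src (cg c hn (i₀ + n + 1 - d)) ∈ G.rng (cg c hn i₀) with hP
    have hPn : P n := by
      refine ⟨hn, le_refl n, ?_⟩
      rw [show i₀ + n + 1 - n = i₀ + 1 by omega]
      exact cg_chain hcyc hn i₀
    have hex : ∃ d, P d := ⟨n, hPn⟩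
    set d₀ := Nat.find hex with hd₀
    have hPd₀ : P d₀ := Nat.find_spec hex
    set s := i₀ + n + 1 - d₀ with hs
    set S := seg c hn s d₀ with hS
    have hScyc : G.IsCycle S := by
      refine seg_cycle hcyc hn hPd₀.1 ?_
      rw [show s + (d₀ - 1) = i₀ + n by obtain ⟨a, b, _⟩ := hPd₀; omega]
      rw [cg_period c hn i₀]
      exact hPd₀.2.2
    have key : ∀ e : G.E, e ∈ c → G.src e ∈ G.rng (cg c hn i₀) → e = cg c hn s := by
      intro e hec hsrc
      have heS : e ∈ S := (huniq S hScyc e).mpr ((huniq c hcyc e).mp hec)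
      rw [seg_mem] at heS
      obtain ⟨t, ht, rfl⟩ := heS
      have ht0 : t = 0 := by
        by_contra ht0
        have hPd' : P (d₀ - t) := by
          refine ⟨by omega, by obtain ⟨a, b, _⟩ := hPd₀; omega, ?_⟩
          rw [show i₀ + n + 1 - (d₀ - t) = s + t by
            obtain ⟨a, b, _⟩ := hPd₀; omega]
          exact hsrc
        exact Nat.find_min hex (by omega) hPd'
      subst ht0
      exact congrArg (cg c hn) (Nat.add_zero s)
    have hfs : f = cg c hn s := key f hfc hsf'
    have hgs : cg c hn (i₀ + 1) = cg c hn s :=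
      key _ (cg_mem c hn _) (cg_chain hcyc hn i₀)
    exact hfneq' (hfs.trans hgs.symm)
  · -- sink exit case
    exact sink_no_reach G hsink (reach_all G h1 hcyc w)

end Ultragraph

/-- if `𝒢` has only trivial saturated hereditary collections and
exactly one cycle, then that cycle has no exits. -/
theorem statement16 (G : Ultragraph) (h1 : G.OnlyTrivialSatHer)
    (h2 : HasExactlyOneCycle G) :
    ∀ c : List G.E, G.IsCycle c → ¬ G.HasExit c :=
  Ultragraph.statement16_aux G h1 h2
end

section
/- Let 𝒢 be an ultragraph and K a field, and suppose every cycle in 𝒢 has an exit and 𝒢 contains a cycle. Then L_K(𝒢) has zero divisors; in particular, L_K(𝒢) is not a division ring. -/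
set_option maxHeartbeats 1000000
set_option synthInstance.maxHeartbeats 400000

open scoped BigOperators

namespace Ultragraph

open scoped Classical

variable (G : Ultragraph)

/-- Raw boundary paths: finite paths tagged with a terminal vertex, or infinite paths. -/
inductive BdRaw (G : Ultragraph) : Type
  | fin : List G.E → G.V → BdRaw G
  | inf : (ℕ → G.E) → BdRaw G

/-- Validity of a raw boundary path. -/
def BdOK : BdRaw G → Prop
  | .fin l w => G.IsPathList l ∧ (∀ h : l ≠ [], w ∈ G.rng (l.getLast h)) ∧ G.IsSingular w
  | .inf α => G.IsInfinitePath α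

/-- Source of a raw boundary path. -/
def bsrcRaw : BdRaw G → G.V
  | .fin [] w => w
  | .fin (e :: _) _ => G.src e
  | .inf α => G.src (α 0)

/-- Boundary paths. -/
def Bd := {x : BdRaw G // G.BdOK x}

/-- Source of a boundary path. -/
def bsrc (x : G.Bd) : G.V := G.bsrcRaw x.1

/-- Prepend an edge. -/
def bconsRaw (e : G.E) : BdRaw G → BdRaw G
  | .fin l w => .fin (e :: l) w
  | .inf α => .inf (fun n => match n with | 0 => e | k + 1 => α k)

/-- Remove the first edge. -/
def btailRaw : BdRaw G → BdRaw G
  | .fin [] w => .fin [] w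
  | .fin (_ :: l) w => .fin l w
  | .inf α => .inf fun n => α (n + 1)

/-- First edge, if any. -/
def bheadRaw? : BdRaw G → Option G.E
  | .fin [] _ => none
  | .fin (e :: _) _ => some e
  | .inf α => some (α 0)

lemma bconsRaw_ok (e : G.E) (x : BdRaw G) (hx : G.BdOK x)
    (h : G.bsrcRaw x ∈ G.rng e) : G.BdOK (G.bconsRaw e x) := by
  cases x with
  | fin l w =>
    obtain ⟨h1, h2, h3⟩ := hx
    cases l with
    | nil =>
      refine ⟨?_, ?_, h3⟩
      · exact List.isChain_singleton e
      · intro _; simpa [bsrcRaw] using h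
    | cons f l' =>
      refine ⟨?_, ?_, h3⟩
      · exact List.isChain_cons_cons.2 ⟨h, h1⟩
      · intro _
        rw [List.getLast_cons (by simp)]
        exact h2 (by simp)
  | inf α =>
    intro k
    cases k with
    | zero => exact h
    | succ n => exact hx n

lemma btailRaw_ok (x : BdRaw G) (hx : G.BdOK x) : G.BdOK (G.btailRaw x) := by
  cases x with
  | fin l w =>
    obtain ⟨h1, h2, h3⟩ := hx
    cases l with
    | nil => exact ⟨h1, h2, h3⟩
    | cons f l' =>
      refine ⟨h1.tail, ?_, h3⟩
      intro h
      have := h2 (by simp)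
      rwa [List.getLast_cons h] at this
  | inf α => exact fun k => hx (k + 1)

lemma bsrcRaw_cons (e : G.E) (x : BdRaw G) : G.bsrcRaw (G.bconsRaw e x) = G.src e := by
  cases x with
  | fin l w => cases l <;> rfl
  | inf α => rfl

lemma bheadRaw_cons (e : G.E) (x : BdRaw G) :
    G.bheadRaw? (G.bconsRaw e x) = some e := by
  cases x with
  | fin l w => cases l <;> rfl
  | inf α => rfl

lemma btailRaw_cons (e : G.E) (x : BdRaw G) : G.btailRaw (G.bconsRaw e x) = x := by
  cases x with
  | fin l w => cases l <;> rfl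
  | inf α =>
    simp only [bconsRaw, btailRaw]

lemma bsrcRaw_head {x : BdRaw G} {e : G.E} (h : G.bheadRaw? x = some e) :
    G.bsrcRaw x = G.src e := by
  cases x with
  | fin l w =>
    cases l with
    | nil => simp [bheadRaw?] at h
    | cons f l' =>
      simp only [bheadRaw?, Option.some.injEq] at h
      subst h; rfl
  | inf α =>
    simp only [bheadRaw?, Option.some.injEq] at h
    subst h; rfl

lemma bsrcRaw_tail {x : BdRaw G} (hx : G.BdOK x) {e : G.E} (h : G.bheadRaw? x = some e) :
    G.bsrcRaw (G.btailRaw x) ∈ G.rng e := by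
  cases x with
  | fin l w =>
    cases l with
    | nil => simp [bheadRaw?] at h
    | cons f l' =>
      simp only [bheadRaw?, Option.some.injEq] at h
      subst h
      obtain ⟨h1, h2, _⟩ := hx
      cases l' with
      | nil =>
        have := h2 (by simp)
        simpa [btailRaw, bsrcRaw, List.getLast] using this
      | cons g l'' =>
        exact (List.isChain_cons_cons.1 h1).1
  | inf α =>
    simp only [bheadRaw?, Option.some.injEq] at h
    subst h
    exact hx 0

lemma bconsRaw_btailRaw {x : BdRaw G} {e : G.E} (h : G.bheadRaw? x = some e) :
    G.bconsRaw e (G.btailRaw x) = x := by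
  cases x with
  | fin l w =>
    cases l with
    | nil => simp [bheadRaw?] at h
    | cons f l' =>
      simp only [bheadRaw?, Option.some.injEq] at h
      subst h; rfl
  | inf α =>
    simp only [bheadRaw?, Option.some.injEq] at h
    subst h
    simp only [btailRaw, bconsRaw, BdRaw.inf.injEq]
    funext n
    cases n <;> rfl

/-- Prepend an edge to a boundary path. -/
def bcons (e : G.E) (x : G.Bd) (h : G.bsrc x ∈ G.rng e) : G.Bd :=
  ⟨G.bconsRaw e x.1, G.bconsRaw_ok e x.1 x.2 h⟩

/-- Tail of a boundary path. -/
def btail (x : G.Bd) : G.Bd := ⟨G.btailRaw x.1, G.btailRaw_ok x.1 x.2⟩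

/-- Every vertex is the source of some boundary path. -/
lemma exists_bd (e₀ : G.E) (v : G.V) : ∃ x : G.Bd, G.bsrc x = v := by
  classical
  obtain ⟨u₀, hu₀⟩ := G.rng_nonempty e₀
  have hstep : ∀ w : G.V, ∃ p : G.E × G.V, ¬ G.IsSingular w →
      G.src p.1 = w ∧ p.2 ∈ G.rng p.1 := by
    intro w
    by_cases hw : G.IsSingular w
    · exact ⟨(e₀, u₀), fun h => absurd hw h⟩
    · have h1 : ¬ G.IsSink w := fun h => hw (Or.inl h)
      obtain ⟨e, he⟩ := Set.nonempty_iff_ne_empty.2 h1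
      obtain ⟨u, hu⟩ := G.rng_nonempty e
      exact ⟨(e, u), fun _ => ⟨he, hu⟩⟩
  choose step hstep' using hstep
  have hstep1 : ∀ w, ¬ G.IsSingular w → G.src (step w).1 = w :=
    fun w h => (hstep' w h).1
  have hstep2 : ∀ w, ¬ G.IsSingular w → (step w).2 ∈ G.rng (step w).1 :=
    fun w h => (hstep' w h).2
  let vs : ℕ → G.V := fun k => Nat.rec v (fun _ w => (step w).2) k
  have hvss : ∀ k, vs (k + 1) = (step (vs k)).2 := fun k => rfl
  by_cases hall : ∀ k, ¬ G.IsSingular (vs k)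
  · refine ⟨⟨.inf (fun k => (step (vs k)).1), ?_⟩, ?_⟩
    · intro k
      show G.src ((step (vs (k + 1))).1) ∈ G.rng ((step (vs k)).1)
      rw [hstep1 _ (hall (k + 1)), hvss k]
      exact hstep2 _ (hall k)
    · show G.src ((step (vs 0)).1) = v
      rw [hstep1 _ (hall 0)]
      rfl
  · push_neg at hall
    have hsing := Nat.find_spec hall
    have hreg : ∀ j, j < Nat.find hall → ¬ G.IsSingular (vs j) :=
      fun j hj => Nat.find_min hall hj
    rcases hfind : Nat.find hall with _ | m
    · rw [hfind] at hsing
      exact ⟨⟨.fin [] v, List.isChain_nil, fun h => absurd rfl h, hsing⟩, rfl⟩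
    · rw [hfind] at hsing hreg
      have hregm : ∀ j, j ≤ m → ¬ G.IsSingular (vs j) :=
        fun j hj => hreg j (Nat.lt_succ_of_le hj)
      have hsrcf : ∀ j, j ≤ m → G.src ((step (vs j)).1) = vs j :=
        fun j hj => hstep1 _ (hregm j hj)
      have hrngf : ∀ j, j ≤ m → vs (j + 1) ∈ G.rng ((step (vs j)).1) := by
        intro j hj
        rw [hvss j]
        exact hstep2 _ (hregm j hj)
      refine ⟨⟨.fin ((List.range (m + 1)).map fun j => (step (vs j)).1)
        (vs (m + 1)), ?_, ?_, hsing⟩, ?_⟩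
      · rw [IsPathList, List.Chain', List.isChain_map, List.isChain_range_succ]
        intro j hj
        rw [hsrcf (j + 1) hj]
        exact hrngf j (Nat.le_of_lt hj)
      · intro h
        have hgl : ((List.range (m + 1)).map fun j => (step (vs j)).1).getLast h =
            (step (vs m)).1 := by
          rw [List.getLast_eq_getElem]
          simp
        rw [hgl]
        exact hrngf m le_rfl
      · show G.bsrcRaw (.fin ((List.range (m + 1)).map fun j => (step (vs j)).1)
          (vs (m + 1))) = v
        have hcons : (List.range (m + 1)).map (fun j => (step (vs j)).1) =
            (step (vs 0)).1 :: (List.range m).map (fun j => (step (vs (j + 1))).1) := by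
          rw [List.range_succ_eq_map, List.map_cons, List.map_map]
          rfl
        rw [hcons]
        show G.src ((step (vs 0)).1) = v
        rw [hstep1 _ (hregm 0 (Nat.zero_le m))]
        rfl

variable (K : Type) [Field K]

/-- Action of `p_A` on basis elements. -/
noncomputable def actP (A : Set G.V) (x : G.Bd) : G.Bd →₀ K :=
  if G.bsrc x ∈ A then Finsupp.single x 1 else 0

/-- Action of `s_e` on basis elements. -/
noncomputable def actS (e : G.E) (x : G.Bd) : G.Bd →₀ K :=
  if h : G.bsrc x ∈ G.rng e then Finsupp.single (G.bcons e x h) 1 else 0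

/-- Action of `s*_e` on basis elements. -/
noncomputable def actT (e : G.E) (x : G.Bd) : G.Bd →₀ K :=
  if G.bheadRaw? x.1 = some e then Finsupp.single (G.btail x) 1 else 0

/-- Linear extension of a map on basis elements. -/
noncomputable def lext (f : G.Bd → (G.Bd →₀ K)) : Module.End K (G.Bd →₀ K) :=
  Finsupp.lsum K fun b => LinearMap.toSpanSingleton K _ (f b)

lemma lext_single (f : G.Bd → (G.Bd →₀ K)) (b : G.Bd) (k : K) :
    G.lext K f (Finsupp.single b k) = k • f b := by
  rw [lext, Finsupp.lsum_single, LinearMap.toSpanSingleton_apply]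

lemma lext_mul (f g h : G.Bd → (G.Bd →₀ K)) (H : ∀ b, G.lext K f (g b) = h b) :
    G.lext K f * G.lext K g = G.lext K h := by
  apply Finsupp.lhom_ext
  intro a k
  rw [Module.End.mul_apply, lext_single, lext_single, map_smul, H]

/-- The representation on the free algebra. -/
noncomputable def rho : FreeAlgebra K (LGen G) →ₐ[K] Module.End K (G.Bd →₀ K) :=
  FreeAlgebra.lift K fun g => match g with
    | .pr A => G.lext K (G.actP K A.1)
    | .ed e => G.lext K (G.actS K e)
    | .st e => G.lext K (G.actT K e)

lemma rho_genP (A : Set G.V) (h : G.Mem0 A) :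
    G.rho K (genP K G A h) = G.lext K (G.actP K A) := FreeAlgebra.lift_ι_apply _ _

lemma rho_genS (e : G.E) : G.rho K (genS K G e) = G.lext K (G.actS K e) :=
  FreeAlgebra.lift_ι_apply _ _

lemma rho_genT (e : G.E) : G.rho K (genT K G e) = G.lext K (G.actT K e) :=
  FreeAlgebra.lift_ι_apply _ _

lemma actP_pos {A : Set G.V} {b : G.Bd} (h : G.bsrc b ∈ A) :
    G.actP K A b = Finsupp.single b 1 := if_pos h

lemma actP_neg {A : Set G.V} {b : G.Bd} (h : G.bsrc b ∉ A) :
    G.actP K A b = 0 := if_neg h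

lemma actS_pos {e : G.E} {b : G.Bd} (h : G.bsrc b ∈ G.rng e) :
    G.actS K e b = Finsupp.single (G.bcons e b h) 1 := dif_pos h

lemma actS_neg {e : G.E} {b : G.Bd} (h : ¬ G.bsrc b ∈ G.rng e) :
    G.actS K e b = 0 := dif_neg h

lemma actT_pos {e : G.E} {b : G.Bd} (h : G.bheadRaw? b.1 = some e) :
    G.actT K e b = Finsupp.single (G.btail b) 1 := if_pos h

lemma actT_neg {e : G.E} {b : G.Bd} (h : ¬ G.bheadRaw? b.1 = some e) :
    G.actT K e b = 0 := if_neg h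

lemma rho_rel {x y : FreeAlgebra K (LGen G)} (h : LRel K G x y) :
    G.rho K x = G.rho K y := by
  induction h with
  | pEmpty =>
    rw [rho_genP, map_zero]
    apply Finsupp.lhom_ext
    intro a k
    rw [lext_single, G.actP_neg K (Set.notMem_empty _), smul_zero,
      LinearMap.zero_apply]
  | @pMul A B hA hB =>
    rw [map_mul, rho_genP, rho_genP, rho_genP]
    apply lext_mul
    intro b
    by_cases hB' : G.bsrc b ∈ B
    · rw [G.actP_pos K hB', lext_single, one_smul]
      by_cases hA' : G.bsrc b ∈ A
      · rw [G.actP_pos K hA', G.actP_pos K (Set.mem_inter hA' hB')]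
      · rw [G.actP_neg K hA', G.actP_neg K (fun hh => hA' hh.1)]
    · rw [G.actP_neg K hB', map_zero, G.actP_neg K (fun hh => hB' hh.2)]
  | @pUnion A B hA hB =>
    rw [map_sub, map_add, rho_genP, rho_genP, rho_genP, rho_genP]
    apply Finsupp.lhom_ext
    intro a k
    rw [LinearMap.sub_apply, LinearMap.add_apply, lext_single, lext_single,
      lext_single, lext_single]
    by_cases hA' : G.bsrc a ∈ A <;> by_cases hB' : G.bsrc a ∈ B
    · rw [G.actP_pos K (Set.mem_union_left _ hA'), G.actP_pos K hA',
        G.actP_pos K hB', G.actP_pos K (Set.mem_inter hA' hB')]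
      abel
    · rw [G.actP_pos K (Set.mem_union_left _ hA'), G.actP_pos K hA',
        G.actP_neg K hB', G.actP_neg K (fun hh => hB' hh.2)]
      simp
    · rw [G.actP_pos K (Set.mem_union_right _ hB'), G.actP_neg K hA',
        G.actP_pos K hB', G.actP_neg K (fun hh => hA' hh.1)]
      simp
    · rw [G.actP_neg K (fun hh => hh.elim hA' hB'), G.actP_neg K hA',
        G.actP_neg K hB', G.actP_neg K (fun hh => hA' hh.1)]
      simp
  | srcMul e =>
    rw [map_mul, rho_genP, rho_genS]
    apply lext_mul
    intro b
    by_cases h : G.bsrc b ∈ G.rng e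
    · rw [G.actS_pos K h, lext_single, one_smul,
        G.actP_pos K (show G.bsrc (G.bcons e b h) ∈ ({G.src e} : Set G.V) from
          G.bsrcRaw_cons e b.1)]
    · rw [G.actS_neg K h, map_zero]
  | mulRng e =>
    rw [map_mul, rho_genS, rho_genP]
    apply lext_mul
    intro b
    by_cases h : G.bsrc b ∈ G.rng e
    · rw [G.actP_pos K h, lext_single, one_smul]
    · rw [G.actP_neg K h, map_zero, G.actS_neg K h]
  | rngStar e =>
    rw [map_mul, rho_genP, rho_genT]
    apply lext_mul
    intro b
    by_cases h : G.bheadRaw? b.1 = some e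
    · rw [G.actT_pos K h, lext_single, one_smul,
        G.actP_pos K (show G.bsrc (G.btail b) ∈ G.rng e from G.bsrcRaw_tail b.2 h)]
    · rw [G.actT_neg K h, map_zero]
  | starSrc e =>
    rw [map_mul, rho_genT, rho_genP]
    apply lext_mul
    intro b
    by_cases h2 : G.bsrc b ∈ ({G.src e} : Set G.V)
    · rw [G.actP_pos K h2, lext_single, one_smul]
    · rw [G.actP_neg K h2, map_zero,
        G.actT_neg K (fun hh => h2 (show G.bsrc b ∈ ({G.src e} : Set G.V) from
          G.bsrcRaw_head hh))]
  | starMulSame e =>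
    rw [map_mul, rho_genT, rho_genS, rho_genP]
    apply lext_mul
    intro b
    by_cases h : G.bsrc b ∈ G.rng e
    · rw [G.actS_pos K h, lext_single, one_smul,
        G.actT_pos K (G.bheadRaw_cons e b.1),
        show G.btail (G.bcons e b h) = b from Subtype.ext (G.btailRaw_cons e b.1),
        G.actP_pos K h]
    · rw [G.actS_neg K h, map_zero, G.actP_neg K h]
  | @starMulDiff e f hef =>
    rw [map_mul, rho_genT, rho_genS, map_zero]
    apply Finsupp.lhom_ext
    intro a k
    rw [Module.End.mul_apply, lext_single, map_smul, LinearMap.zero_apply]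
    by_cases h : G.bsrc a ∈ G.rng f
    · rw [G.actS_pos K h, lext_single, one_smul,
        G.actT_neg K (fun hh => hef (by
          rw [show G.bheadRaw? (G.bcons f a h).1 = some f from
            G.bheadRaw_cons f a.1] at hh
          exact (Option.some.inj hh).symm)), smul_zero]
    · rw [G.actS_neg K h, map_zero, smul_zero]
  | ck v hreg =>
    rw [rho_genP, map_sum]
    apply Finsupp.lhom_ext
    intro a k
    rw [lext_single, LinearMap.sum_apply]
    have hterm : ∀ e, G.rho K (genS K G e * genT K G e) =
        G.lext K (G.actS K e) * G.lext K (G.actT K e) := by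
      intro e; rw [map_mul, rho_genS, rho_genT]
    simp only [hterm]
    have hsum : ∀ e ∈ hreg.2.toFinset,
        (G.lext K (G.actS K e) * G.lext K (G.actT K e)) (Finsupp.single a k) =
        k • (G.lext K (G.actS K e) (G.actT K e a)) := by
      intro e _
      rw [Module.End.mul_apply, lext_single, map_smul]
    rw [Finset.sum_congr rfl hsum, ← Finset.smul_sum]
    congr 1
    rcases hhead : G.bheadRaw? a.1 with _ | e₀
    · have hzero : ∀ e ∈ hreg.2.toFinset,
          G.lext K (G.actS K e) (G.actT K e a) = 0 := by
        intro e _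
        rw [G.actT_neg K (by rw [hhead]; simp), map_zero]
      rw [Finset.sum_eq_zero hzero]
      rcases ha : a.1 with ⟨l, w⟩ | α
      · cases l with
        | nil =>
          have hsing : G.IsSingular w := by
            have h2 := a.2
            rw [ha] at h2
            exact h2.2.2
          have hne : G.bsrc a ∉ ({v} : Set G.V) := by
            rw [bsrc, ha]
            show ¬ w = v
            intro h
            subst h
            rcases hsing with hs | hi
            · exact hreg.1.ne_empty hs
            · exact hi hreg.2
          rw [G.actP_neg K hne]
        | cons f l' => rw [ha] at hhead; simp [bheadRaw?] at hhead
      · rw [ha] at hhead; simp [bheadRaw?] at hhead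
    · have hsrc : G.bsrc a = G.src e₀ := G.bsrcRaw_head hhead
      by_cases hmem : e₀ ∈ hreg.2.toFinset
      · have he₀v : G.src e₀ = v := by
          have h5 := hreg.2.mem_toFinset.1 hmem
          simpa [emitted] using h5
        have hside : ∀ e ∈ hreg.2.toFinset, e ≠ e₀ →
            G.lext K (G.actS K e) (G.actT K e a) = 0 := by
          intro e _ hne
          rw [G.actT_neg K (fun hh => hne (by
            rw [hhead] at hh
            exact (Option.some.inj hh).symm)), map_zero]
        rw [Finset.sum_eq_single_of_mem e₀ hmem hside]
        have htl : G.bsrc (G.btail a) ∈ G.rng e₀ := G.bsrcRaw_tail a.2 hhead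
        rw [G.actT_pos K hhead, lext_single, one_smul, G.actS_pos K htl,
          show G.bcons e₀ (G.btail a) htl = a from
            Subtype.ext (G.bconsRaw_btailRaw hhead),
          G.actP_pos K (show G.bsrc a ∈ ({v} : Set G.V) from hsrc.trans he₀v)]
      · have hnev : G.src e₀ ≠ v := by
          intro h
          exact hmem (hreg.2.mem_toFinset.2 (by simpa [emitted] using h))
        have hzero : ∀ e ∈ hreg.2.toFinset,
            G.lext K (G.actS K e) (G.actT K e a) = 0 := by
          intro e he
          have hee : e ≠ e₀ := by
            intro h
            subst h
            exact hmem he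
          rw [G.actT_neg K (fun hh => hee (by
            rw [hhead] at hh
            exact (Option.some.inj hh).symm)), map_zero]
        rw [Finset.sum_eq_zero hzero]
        rw [G.actP_neg K (show G.bsrc a ∉ ({v} : Set G.V) from
          fun hh => hnev (hsrc.symm.trans hh))]

/-- The representation on the quotient. -/
noncomputable def rhoQ : LPAEnv K G →ₐ[K] Module.End K (G.Bd →₀ K) :=
  RingQuot.liftAlgHom K ⟨G.rho K, fun _ _ h => G.rho_rel K h⟩

lemma rhoQ_lmk (x : FreeAlgebra K (LGen G)) :
    G.rhoQ K (lmk K G x) = G.rho K x :=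
  RingQuot.liftAlgHom_mkAlgHom_apply _ _ _ _

lemma ne_zero_of_rho {x : LPA K G} (h : G.rhoQ K x.1 ≠ 0) : x ≠ 0 := by
  intro hx
  rw [hx] at h
  exact h (by rw [ZeroMemClass.coe_zero, map_zero])

lemma se_ne_zero (e : G.E) : se K G e ≠ 0 := by
  apply ne_zero_of_rho
  obtain ⟨u, hu⟩ := G.rng_nonempty e
  obtain ⟨x, hx⟩ := G.exists_bd e u
  have hmem : G.bsrc x ∈ G.rng e := hx ▸ hu
  intro h0
  have h1 : G.rhoQ K (se K G e).1 (Finsupp.single x 1) =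
      Finsupp.single (G.bcons e x hmem) 1 := by
    rw [show (se K G e).1 = lmk K G (genS K G e) from rfl, rhoQ_lmk, rho_genS,
      lext_single, one_smul]
    simp [actS, hmem]
  rw [h0] at h1
  simp only [LinearMap.zero_apply] at h1
  exact one_ne_zero (Finsupp.single_eq_zero.1 h1.symm)

lemma st_ne_zero (e : G.E) : st K G e ≠ 0 := by
  apply ne_zero_of_rho
  obtain ⟨u, hu⟩ := G.rng_nonempty e
  obtain ⟨x, hx⟩ := G.exists_bd e u
  have hmem : G.bsrc x ∈ G.rng e := hx ▸ hu
  intro h0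
  have hhead : G.bheadRaw? (G.bcons e x hmem).1 = some e := G.bheadRaw_cons e x.1
  have h1 : G.rhoQ K (st K G e).1 (Finsupp.single (G.bcons e x hmem) 1) =
      Finsupp.single x 1 := by
    rw [show (st K G e).1 = lmk K G (genT K G e) from rfl, rhoQ_lmk, rho_genT,
      lext_single, one_smul]
    have h2 : G.btail (G.bcons e x hmem) = x := Subtype.ext (G.btailRaw_cons e x.1)
    simp [actT, hhead, h2]
  rw [h0] at h1
  simp only [LinearMap.zero_apply] at h1
  exact one_ne_zero (Finsupp.single_eq_zero.1 h1.symm)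

lemma p_singleton_ne_zero (e₀ : G.E) (w : G.V) : p K G {w} (Mem0.singleton w) ≠ 0 := by
  apply ne_zero_of_rho
  obtain ⟨x, hx⟩ := G.exists_bd e₀ w
  intro h0
  have h1 : G.rhoQ K (p K G {w} (Mem0.singleton w)).1 (Finsupp.single x 1) =
      Finsupp.single x 1 := by
    rw [show (p K G {w} (Mem0.singleton w)).1 =
        lmk K G (genP K G {w} (Mem0.singleton w)) from rfl, rhoQ_lmk, rho_genP,
      lext_single, one_smul]
    simp [actP, hx]
  rw [h0] at h1
  simp only [LinearMap.zero_apply] at h1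
  exact one_ne_zero (Finsupp.single_eq_zero.1 h1.symm)

lemma lmk_rel {x y : FreeAlgebra K (LGen G)} (h : LRel K G x y) :
    lmk K G x = lmk K G y := RingQuot.mkAlgHom_rel K h

lemma lmkP_congr {A B : Set G.V} (hA : G.Mem0 A) (hB : G.Mem0 B) (h : A = B) :
    lmk K G (genP K G A hA) = lmk K G (genP K G B hB) := by subst h; rfl

lemma st_mul_se_eq_zero {e f : G.E} (h : e ≠ f) : st K G e * se K G f = 0 := by
  apply Subtype.ext
  show lmk K G (genT K G e) * lmk K G (genS K G f) = 0
  rw [← map_mul, G.lmk_rel K (LRel.starMulDiff h), map_zero]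

lemma pw_mul_se_eq_zero {w : G.V} {e : G.E} (h : w ≠ G.src e) :
    p K G {w} (Mem0.singleton w) * se K G e = 0 := by
  apply Subtype.ext
  show lmk K G (genP K G {w} (Mem0.singleton w)) * lmk K G (genS K G e) = 0
  rw [← G.lmk_rel K (LRel.srcMul e), map_mul, ← mul_assoc, ← map_mul,
    G.lmk_rel K (LRel.pMul (Mem0.singleton w) (Mem0.singleton (G.src e)))]
  have hset : ({w} : Set G.V) ∩ {G.src e} = ∅ := by
    rw [Set.singleton_inter_eq_empty]
    simpa using h
  rw [G.lmkP_congr K _ Mem0.empty hset, G.lmk_rel K LRel.pEmpty, map_zero, zero_mul]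

end Ultragraph

/-- if every cycle has an exit and there is a cycle, then
`L_K(𝒢)` has zero divisors, hence is not a division ring. -/
theorem statement17 (K : Type) [Field K] (G : Ultragraph)
    (h1 : ∀ c : List G.E, G.IsCycle c → G.HasExit c)
    (h2 : ∃ c : List G.E, G.IsCycle c) :
    (∃ a b : Ultragraph.LPA K G, a ≠ 0 ∧ b ≠ 0 ∧ a * b = 0) ∧
    ¬ IsDivisionRingLike (Ultragraph.LPA K G) := by
  classical
  obtain ⟨c, hc⟩ := h2
  obtain ⟨i, hexit⟩ := h1 c hc
  have main : ∃ a b : Ultragraph.LPA K G, a ≠ 0 ∧ b ≠ 0 ∧ a * b = 0 := by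
    rcases hexit with ⟨f, _, hf2⟩ | ⟨w, hw1, hw2⟩
    · exact ⟨Ultragraph.st K G f, Ultragraph.se K G _,
        G.st_ne_zero K f, G.se_ne_zero K _, G.st_mul_se_eq_zero K hf2⟩
    · refine ⟨Ultragraph.p K G {w} (Ultragraph.Mem0.singleton w),
        Ultragraph.se K G (c.get i),
        G.p_singleton_ne_zero K (c.get i) w, G.se_ne_zero K _,
        G.pw_mul_se_eq_zero K ?_⟩
      intro hws
      have hm : c.get i ∈ G.emitted w := hws.symm
      rw [hw2] at hm
      exact hm
  refine ⟨main, ?_⟩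
  rintro ⟨u, hu, -, hinv⟩
  obtain ⟨a, b, ha, hb, hab⟩ := main
  obtain ⟨y, -, hy2⟩ := hinv a ha
  apply hb
  have h3 : y * (a * b) = 0 := by rw [hab, mul_zero]
  rw [← mul_assoc, hy2] at h3
  rw [← (hu b).1, h3]
end

section
/- Let 𝒢 be an ultragraph whose only saturated hereditary subsets of 𝒢⁰ are ∅ and 𝒢⁰, and let ℋ be a nonempty saturated hereditary subset. Then for every vertex w ∈ G⁰ with {w} ∉ ℋ, there exists an edge e ∈ 𝒢¹ with s(e) = w and a vertex w' ∈ r(e) with {w'} ∉ ℋ; consequently any nonempty saturated hereditary subset equals 𝒢⁰ provided conditions (1)–(3) of the simplicity criterion hold. -/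
set_option maxHeartbeats 1000000
set_option synthInstance.maxHeartbeats 400000

open scoped BigOperators

section AuxStatement18

variable {G : Ultragraph} {H : Set (Set G.V)}

lemma aux_mem_of_subset (hher : G.Hereditary H) {A B : Set G.V} (hA : A ∈ H)
    (hB : G.Mem0 B) (hsub : B ⊆ A) : B ∈ H :=
  hher.2.2.2 A hA B hB hsub

lemma aux_path_last_mem (hher : G.Hereditary H) :
    ∀ (l : List G.E) (h : l ≠ []), G.IsPathList l →
      ({G.src (l.head h)} : Set G.V) ∈ H → G.rng (l.getLast h) ∈ H
  | [], h, _, _ => absurd rfl h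
  | [e], _, _, hm => hher.2.1 e hm
  | e :: f :: l, _, hp, hm => by
      have hch := List.isChain_cons_cons.mp hp
      have h1 : G.rng e ∈ H := hher.2.1 e hm
      have h2 : ({G.src f} : Set G.V) ∈ H :=
        aux_mem_of_subset hher h1 (Ultragraph.Mem0.singleton _)
          (by simpa using hch.1)
      have h3 := aux_path_last_mem hher (f :: l) (by simp) hch.2 (by simpa using h2)
      rw [List.getLast_cons (by simp : (f :: l) ≠ [])]
      exact h3

lemma aux_pathRange_mem (hher : G.Hereditary H) {v : G.V} {A : Set G.V}
    (hv : ({v} : Set G.V) ∈ H) (hA : A ∈ G.pathRangesFrom v) : A ∈ H := by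
  rcases hA with rfl | ⟨l, h, hp, hs, rfl⟩
  · exact hv
  · exact aux_path_last_mem hher l h hp (by rw [hs]; exact hv)

lemma aux_geq_mem (hher : G.Hereditary H) {v u : G.V}
    (hv : ({v} : Set G.V) ∈ H) (h : G.Geq v u) : ({u} : Set G.V) ∈ H := by
  rcases h with ⟨A, hA, huA⟩
  exact aux_mem_of_subset hher (aux_pathRange_mem hher hv hA)
    (Ultragraph.Mem0.singleton _) (by simpa using huA)

lemma aux_mem0_iUnion :
    ∀ (n : ℕ) (B : Fin n → Set G.V), (∀ i, G.Mem0 (B i)) → G.Mem0 (⋃ i, B i)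
  | 0, B, _ => by
      have : (⋃ i : Fin 0, B i) = ∅ := by simp
      rw [this]; exact Ultragraph.Mem0.empty
  | n + 1, B, hB => by
      have ih := aux_mem0_iUnion n (fun i => B i.succ) (fun i => hB i.succ)
      have huniv : (⋃ i, B i) = B 0 ∪ ⋃ i : Fin n, B i.succ := by
        ext x; simp [Fin.exists_fin_succ]
      rw [huniv]; exact Ultragraph.Mem0.union (hB 0) ih

lemma aux_iUnion_mem (hher : G.Hereditary H) (h0 : ∅ ∈ H) :
    ∀ (n : ℕ) (B : Fin n → Set G.V), (∀ i, B i ∈ H) → (⋃ i, B i) ∈ H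
  | 0, B, _ => by
      have : (⋃ i : Fin 0, B i) = ∅ := by simp
      rw [this]; exact h0
  | n + 1, B, hB => by
      have ih := aux_iUnion_mem hher h0 n (fun i => B i.succ) (fun i => hB i.succ)
      have huniv : (⋃ i, B i) = B 0 ∪ ⋃ i : Fin n, B i.succ := by
        ext x; simp [Fin.exists_fin_succ]
      rw [huniv]; exact hher.2.2.1 _ (hB 0) _ ih

lemma aux_finite_mem (hher : G.Hereditary H) (h0 : ∅ ∈ H) {s : Set G.V}
    (hs : s.Finite) (h : ∀ x ∈ s, ({x} : Set G.V) ∈ H) : s ∈ H := by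
  refine Set.Finite.induction_on
    (motive := fun t _ => (∀ x ∈ t, ({x} : Set G.V) ∈ H) → t ∈ H) s hs
    (fun _ => h0) ?_ h
  intro a t _ _ ih h
  have ht : t ∈ H := ih (fun x hx => h x (Set.mem_insert_of_mem a hx))
  have ha : ({a} : Set G.V) ∈ H := h a (Set.mem_insert a t)
  rw [Set.insert_eq]
  exact hher.2.2.1 _ ha _ ht

end AuxStatement18

/-- under conditions (1)-(3), from every vertex whose singleton
is not in a nonempty saturated hereditary collection `ℋ` there is an edge to a
vertex whose singleton is not in `ℋ`; consequently `ℋ = 𝒢⁰`. -/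
theorem statement18 (G : Ultragraph) (h1 : G.CondInfPaths) (h2 : G.CondSingular)
    (h3 : G.CondInfRange) (H : Set (Set G.V)) (hher : G.Hereditary H)
    (hsat : G.Saturated H) (hne : ∃ A ∈ H, A.Nonempty) :
    (∀ w : G.V, ({w} : Set G.V) ∉ H → ∃ e : G.E, G.src e = w ∧
      ∃ w' ∈ G.rng e, ({w'} : Set G.V) ∉ H) ∧
    H = G.G0 := by
  classical
  obtain ⟨A0, hA0, u, hu⟩ := hne
  have hempty : (∅ : Set G.V) ∈ H :=
    aux_mem_of_subset hher hA0 Ultragraph.Mem0.empty (Set.empty_subset _)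
  have huH : ({u} : Set G.V) ∈ H :=
    aux_mem_of_subset hher hA0 (Ultragraph.Mem0.singleton u) (by simpa using hu)
  -- Part (a)
  have part1 : ∀ w : G.V, ({w} : Set G.V) ∉ H → ∃ e : G.E, G.src e = w ∧
      ∃ w' ∈ G.rng e, ({w'} : Set G.V) ∉ H := by
    intro w hw
    -- w is not singular
    have hns : ¬ G.IsSingular w := by
      intro hsing
      exact hw (aux_geq_mem hher huH (h2 w hsing u))
    have hreg : G.IsRegular w := by
      rw [Ultragraph.IsSingular] at hns
      push_neg at hns
      exact ⟨Set.nonempty_iff_ne_empty.mpr hns.1, hns.2⟩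
    by_contra hcon
    push_neg at hcon
    apply hw
    apply hsat w hreg
    intro e he
    have hall : ∀ w' ∈ G.rng e, ({w'} : Set G.V) ∈ H := by
      intro w' hw'
      by_contra hc
      exact hc (hcon e he w' hw')
    by_cases hfin : (G.rng e).Finite
    · exact aux_finite_mem hher hempty hfin hall
    · obtain ⟨A, hAsub, hAcof, n, B, hB, hcov⟩ :=
        h3 e hfin u
      have hBH : ∀ i, B i ∈ H := fun i => aux_pathRange_mem hher huH (hB i)
      have hU : (⋃ i, B i) ∈ H := aux_iUnion_mem hher hempty n B hBH
      have hU0 : G.Mem0 (⋃ i, B i) := aux_mem0_iUnion n B (fun i => hher.1 _ (hBH i))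
      set A' : Set G.V := G.rng e ∩ ⋃ i, B i with hA'
      have hA'H : A' ∈ H :=
        aux_mem_of_subset hher hU (Ultragraph.Mem0.inter (Ultragraph.Mem0.range e) hU0)
          Set.inter_subset_right
      set D : Set G.V := G.rng e \ A' with hD
      have hDsub : D ⊆ G.rng e \ A := by
        intro x hx
        refine ⟨hx.1, fun hxA => hx.2 ⟨hx.1, hcov hxA⟩⟩
      have hDfin : D.Finite := hAcof.subset hDsub
      have hDH : D ∈ H :=
        aux_finite_mem hher hempty hDfin (fun x hx => hall x hx.1)
      have heq : G.rng e = A' ∪ D := by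
        ext x
        constructor
        · intro hx
          by_cases hxA : x ∈ A'
          · exact Or.inl hxA
          · exact Or.inr ⟨hx, hxA⟩
        · rintro (hx | hx)
          · exact hx.1
          · exact hx.1
      rw [heq]
      exact hher.2.2.1 _ hA'H _ hDH
  refine ⟨part1, ?_⟩
  -- all singletons are in H
  have hsingl : ∀ w : G.V, ({w} : Set G.V) ∈ H := by
    by_contra hc
    push_neg at hc
    obtain ⟨w0, hw0⟩ := hc
    have step : ∀ w : {w : G.V // ({w} : Set G.V) ∉ H},
        ∃ p : G.E × {w' : G.V // ({w'} : Set G.V) ∉ H},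
          G.src p.1 = w.1 ∧ p.2.1 ∈ G.rng p.1 := by
      rintro ⟨w, hw⟩
      obtain ⟨e, he, w', hw', hw'H⟩ := part1 w hw
      exact ⟨⟨e, ⟨w', hw'H⟩⟩, he, hw'⟩
    choose f hf1 hf2 using step
    let seq : ℕ → {w : G.V // ({w} : Set G.V) ∉ H} := fun n =>
      Nat.rec ⟨w0, hw0⟩ (fun _ w => (f w).2) n
    have hseq : ∀ n, seq (n + 1) = (f (seq n)).2 := fun n => rfl
    let α : ℕ → G.E := fun n => (f (seq n)).1
    have hpath : G.IsInfinitePath α := by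
      intro i
      have h1' : G.src (α (i + 1)) = (seq (i + 1)).1 := hf1 (seq (i + 1))
      rw [h1', hseq i]
      exact hf2 (seq i)
    obtain ⟨i, hi⟩ := h1 α hpath u
    have : G.src (α i) = (seq i).1 := hf1 (seq i)
    rw [this] at hi
    exact (seq i).2 (aux_geq_mem hher huH hi)
  -- conclude H = G0
  apply Set.eq_of_subset_of_subset
  · intro A hA
    exact hher.1 A hA
  · intro A hA
    induction hA with
    | empty => exact hempty
    | singleton v => exact hsingl v
    | range e => exact hher.2.1 e (hsingl _)
    | union hA hB ihA ihB => exact hher.2.2.1 _ ihA _ ihB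
    | @inter A B hA hB ihA _ =>
        exact aux_mem_of_subset hher ihA (Ultragraph.Mem0.inter hA hB)
          Set.inter_subset_left
end
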